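/- arXiv:2302.04114 — 12 statements merged into one kernel-verified Lean document; each statement's English description precedes it below -/
import Mathlib

section
/- The null space of the directed Laplacian L is exactly the span of the all-ones vector: a vector x satisfies L·x = 0 if and only if x = k·𝟏 for some real number k. -/
open Matrix BigOperators

lemma pow_nonneg_entries {n : ℕ} (P : Matrix (Fin n) (Fin n) ℝ)
    (hP0 : ∀ i j, 0 ≤ P i j) : ∀ m i j, 0 ≤ (P ^ m) i j := by
  intro m
  induction m with
  | zero =>
    intro i j
    simp [Matrix.one_apply]
    split <;> norm_num
  | succ m ih =>
    intro i j
    rw [pow_succ, Matrix.mul_apply]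
    exact Finset.sum_nonneg fun k _ => mul_nonneg (ih i k) (hP0 k j)

lemma pow_row_sum {n : ℕ} (P : Matrix (Fin n) (Fin n) ℝ)
    (hProw : ∀ i, ∑ j, P i j = 1) : ∀ m i, ∑ j, (P ^ m) i j = 1 := by
  intro m
  induction m with
  | zero =>
    intro i
    simp [Matrix.one_apply]
  | succ m ih =>
    intro i
    simp only [pow_succ, Matrix.mul_apply]
    rw [Finset.sum_comm]
    calc ∑ k, ∑ j, (P ^ m) i k * P k j
        = ∑ k, (P ^ m) i k * ∑ j, P k j := by
          simp [Finset.mul_sum]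
      _ = 1 := by simp [hProw, ih i]

/-- The null space of the directed Laplacian `L` is exactly the span of
the all-ones vector: `L ⬝ x = 0` iff `x = k • 𝟏` for some real `k`. -/
theorem directed_laplacian_null_space
    {n : ℕ} (hn : 2 ≤ n)
    (P : Matrix (Fin n) (Fin n) ℝ)
    (hP0 : ∀ i j, 0 ≤ P i j)
    (hProw : ∀ i, ∑ j, P i j = 1)
    (hPirr : ∀ i j, ∃ m : ℕ, 1 ≤ m ∧ 0 < (P ^ m) i j)
    (pv : Fin n → ℝ) (hpv0 : ∀ i, 0 < pv i) (hpvsum : ∑ i, pv i = 1)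
    (hstat : pv ᵥ* P = pv)
    (d : ℝ) (hd : 0 < d)
    (L : Matrix (Fin n) (Fin n) ℝ)
    (hL : L = d • (Matrix.diagonal pv * (1 - P))) :
    ∀ x : Fin n → ℝ, L *ᵥ x = 0 ↔ ∃ k : ℝ, x = k • (fun _ => (1 : ℝ)) := by
  intro x
  constructor
  · intro hx
    -- From L x = 0, deduce x = P x
    have hfix : P *ᵥ x = x := by
      funext i
      have h0 : (L *ᵥ x) i = 0 := by rw [hx]; rfl
      rw [hL] at h0
      simp only [Matrix.smul_mulVec, Pi.smul_apply, smul_eq_mul,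
        ← Matrix.mulVec_mulVec] at h0
      have h1 : d * (pv i * (((1 - P) *ᵥ x) i)) = 0 := by
        have : ((Matrix.diagonal pv) *ᵥ ((1 - P) *ᵥ x)) i
            = pv i * (((1 - P) *ᵥ x) i) := by
          simp [Matrix.mulVec_diagonal]
        rw [← this]; exact h0
      have h2 : ((1 - P) *ᵥ x) i = 0 := by
        have := mul_eq_zero.mp h1
        rcases this with h | h
        · exact absurd h hd.ne'
        rcases mul_eq_zero.mp h with h | h
        · exact absurd h (hpv0 i).ne'
        · exact h
      have h3 : x i - (P *ᵥ x) i = 0 := by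
        simpa [Matrix.sub_mulVec] using h2
      linarith
    -- x = P^m x for all m
    have hfixm : ∀ m : ℕ, (P ^ m) *ᵥ x = x := by
      intro m
      induction m with
      | zero => simp
      | succ m ih =>
        rw [pow_succ, ← Matrix.mulVec_mulVec, hfix, ih]
    -- take an index i0 maximizing x
    obtain ⟨i0, _, hi0⟩ := Finset.exists_max_image Finset.univ x
      ⟨⟨0, by omega⟩, Finset.mem_univ _⟩
    refine ⟨x i0, ?_⟩
    funext j
    simp only [Pi.smul_apply, smul_eq_mul, mul_one]
    obtain ⟨m, _, hm⟩ := hPirr i0 j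
    have hnn := pow_nonneg_entries P hP0 m
    have hrow := pow_row_sum P hProw m i0
    have hsum0 : ∑ k, (P ^ m) i0 k * (x i0 - x k) = 0 := by
      have hPx : ∑ k, (P ^ m) i0 k * x k = x i0 := by
        have := congrFun (hfixm m) i0
        simpa [Matrix.mulVec, dotProduct] using this
      calc ∑ k, (P ^ m) i0 k * (x i0 - x k)
          = (∑ k, (P ^ m) i0 k) * x i0 - ∑ k, (P ^ m) i0 k * x k := by
            rw [Finset.sum_mul]
            rw [← Finset.sum_sub_distrib]
            congr 1; funext k; ring
        _ = 0 := by rw [hrow, hPx]; ring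
    have hterm : ∀ k ∈ Finset.univ, 0 ≤ (P ^ m) i0 k * (x i0 - x k) :=
      fun k _ => mul_nonneg (hnn i0 k) (by have := hi0 k (Finset.mem_univ k); linarith)
    have := (Finset.sum_eq_zero_iff_of_nonneg hterm).mp hsum0 j (Finset.mem_univ j)
    rcases mul_eq_zero.mp this with h | h
    · exact absurd h hm.ne'
    · linarith
  · rintro ⟨k, rfl⟩
    rw [hL]
    funext i
    have hPone : (P *ᵥ (k • fun _ => (1:ℝ))) i = k := by
      simp [Matrix.mulVec, dotProduct, Finset.mul_sum, ← Finset.sum_mul, hProw i]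
    simp only [Matrix.smul_mulVec, Pi.smul_apply, smul_eq_mul,
      ← Matrix.mulVec_mulVec, Matrix.sub_mulVec]
    have : ((1 - P) *ᵥ (k • fun _ => (1:ℝ))) i = 0 := by
      rw [Matrix.sub_mulVec]
      simp only [Pi.sub_apply, Matrix.one_mulVec, hPone]
      simp
    simp [Matrix.mulVec_diagonal, this, Pi.zero_apply]
    right; right
    rw [hPone]; ring
end

section
/- The matrix M = (L − (1/n)·J)⁻¹ + (1/n)·J satisfies the four Penrose conditions for L, namely L·M·L = L, M·L·M = M, (L·M)ᵀ = L·M and (M·L)ᵀ = M·L; hence M is the Moore–Penrose pseudoinverse L† of L. -/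
open Matrix BigOperators

/-- The matrix `M = (L − (1/n)J)⁻¹ + (1/n)J` satisfies the four Penrose
conditions for `L`; hence it is the Moore–Penrose pseudoinverse of `L`. -/
theorem directed_laplacian_pseudoinverse_formula
    {n : ℕ} (hn : 2 ≤ n)
    (P : Matrix (Fin n) (Fin n) ℝ)
    (hP0 : ∀ i j, 0 ≤ P i j)
    (hProw : ∀ i, ∑ j, P i j = 1)
    (hPirr : ∀ i j, ∃ m : ℕ, 1 ≤ m ∧ 0 < (P ^ m) i j)
    (pv : Fin n → ℝ) (hpv0 : ∀ i, 0 < pv i) (hpvsum : ∑ i, pv i = 1)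
    (hstat : pv ᵥ* P = pv)
    (d : ℝ) (hd : 0 < d)
    (L : Matrix (Fin n) (Fin n) ℝ)
    (hL : L = d • (Matrix.diagonal pv * (1 - P)))
    (J : Matrix (Fin n) (Fin n) ℝ)
    (hJ : J = Matrix.of fun _ _ => (1 : ℝ))
    (hinv : IsUnit (L - (1 / (n : ℝ)) • J))
    (M : Matrix (Fin n) (Fin n) ℝ)
    (hM : M = (L - (1 / (n : ℝ)) • J)⁻¹ + (1 / (n : ℝ)) • J) :
    L * M * L = L ∧ M * L * M = M ∧ (L * M)ᵀ = L * M ∧ (M * L)ᵀ = M * L := by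
  have hn0 : (n : ℝ) ≠ 0 := by positivity
  -- row sums of L are zero, hence L * J = 0
  have hLJ : L * J = 0 := by
    subst hL hJ
    ext i j
    simp only [Matrix.mul_apply, Matrix.smul_apply, Matrix.of_apply, Matrix.zero_apply,
      Matrix.diagonal_apply, ite_mul, zero_mul, Finset.sum_ite_eq, Finset.mem_univ, if_true,
      Matrix.sub_apply, Matrix.one_apply, smul_eq_mul, mul_one]
    rw [← Finset.mul_sum, ← Finset.mul_sum, Finset.sum_sub_distrib, hProw]
    simp
  -- column sums of L are zero, hence J * L = 0
  have hJL : J * L = 0 := by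
    subst hL hJ
    ext i j
    simp only [Matrix.mul_apply, Matrix.smul_apply, Matrix.of_apply, Matrix.zero_apply,
      Matrix.diagonal_apply, ite_mul, zero_mul, Finset.sum_ite_eq, Finset.mem_univ, if_true,
      Matrix.sub_apply, Matrix.one_apply, smul_eq_mul, one_mul]
    rw [← Finset.mul_sum]
    simp only [mul_sub]
    rw [Finset.sum_sub_distrib]
    have h1 : ∑ k, pv k * (if k = j then (1 : ℝ) else 0) = pv j := by
      simp [mul_ite]
    have h2 : ∑ k, pv k * P k j = pv j := by
      have := congrFun hstat j
      simpa [Matrix.vecMul, dotProduct] using this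
    rw [h1, h2]
    simp
  have hJJ : J * J = (n : ℝ) • J := by
    subst hJ
    ext i j
    simp [Matrix.mul_apply]
  set A := L - (1 / (n : ℝ)) • J with hA
  have hAJ : A * J = -J := by
    rw [hA, Matrix.sub_mul, hLJ, Matrix.smul_mul, hJJ, smul_smul]
    rw [one_div, inv_mul_cancel₀ hn0]
    simp
  have hJA : J * A = -J := by
    rw [hA, Matrix.mul_sub, hJL, Matrix.mul_smul, hJJ, smul_smul]
    rw [one_div, inv_mul_cancel₀ hn0]
    simp
  have hdet : IsUnit A.det := (Matrix.isUnit_iff_isUnit_det A).mp hinv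
  have hAi : A * A⁻¹ = 1 := Matrix.mul_nonsing_inv A hdet
  have hiA : A⁻¹ * A = 1 := Matrix.nonsing_inv_mul A hdet
  have hiJ : A⁻¹ * J = -J := by
    have : A⁻¹ * (A * J) = J := by rw [← Matrix.mul_assoc, hiA, Matrix.one_mul]
    rw [hAJ, Matrix.mul_neg] at this
    exact neg_eq_iff_eq_neg.mp this
  have hJi : J * A⁻¹ = -J := by
    have : (J * A) * A⁻¹ = J := by rw [Matrix.mul_assoc, hAi, Matrix.mul_one]
    rw [hJA, Matrix.neg_mul] at this
    exact neg_eq_iff_eq_neg.mp this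
  have hLA : L = A + (1 / (n : ℝ)) • J := by rw [hA]; module
  have hc : 1 / (n:ℝ) * (1 / (n:ℝ)) * (n:ℝ) = 1 / (n:ℝ) := by field_simp
  have hLM : L * M = 1 - (1 / (n : ℝ)) • J := by
    rw [hLA, hM, Matrix.add_mul, Matrix.mul_add, Matrix.mul_add, hAi, Matrix.mul_smul, hAJ,
      Matrix.smul_mul, hJi, Matrix.smul_mul, Matrix.mul_smul, hJJ, smul_smul, smul_smul, hc]
    module
  have hML : M * L = 1 - (1 / (n : ℝ)) • J := by
    rw [hLA, hM, Matrix.add_mul, Matrix.mul_add, Matrix.mul_add, hiA, Matrix.mul_smul, hiJ,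
      Matrix.smul_mul, hJA, Matrix.smul_mul, Matrix.mul_smul, hJJ, smul_smul, smul_smul, hc]
    module
  have hJM : J * M = 0 := by
    rw [hM, Matrix.mul_add, hJi, Matrix.mul_smul, hJJ, smul_smul, one_div,
      inv_mul_cancel₀ hn0, one_smul]
    simp
  have hJT : Jᵀ = J := by subst hJ; ext i j; simp
  refine ⟨?_, ?_, ?_, ?_⟩
  · rw [hLM, Matrix.sub_mul, Matrix.one_mul, Matrix.smul_mul, hJL]
    simp
  · rw [hML, Matrix.sub_mul, Matrix.one_mul, Matrix.smul_mul, hJM]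
    simp
  · rw [hLM, Matrix.transpose_sub, Matrix.transpose_smul, hJT, Matrix.transpose_one]
  · rw [hML, Matrix.transpose_sub, Matrix.transpose_smul, hJT, Matrix.transpose_one]
end

section
/- If M satisfies the four Penrose conditions for L (L·M·L = L, M·L·M = M, (L·M)ᵀ = L·M, (M·L)ᵀ = M·L), then L·M = M·L = I − (1/n)·J; in particular L commutes with its Moore–Penrose pseudoinverse, i.e., L is an EP-matrix. -/
open Matrix BigOperators

lemma stoch_pow {n : ℕ} (Q : Matrix (Fin n) (Fin n) ℝ)
    (h0 : ∀ i j, 0 ≤ Q i j) (h1 : ∀ i, ∑ j, Q i j = 1) :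
    ∀ m, (∀ i j, 0 ≤ (Q ^ (m+1)) i j) ∧ (∀ i, ∑ j, (Q ^ (m+1)) i j = 1) := by
  intro m
  induction m with
  | zero => simpa [pow_one] using ⟨h0, h1⟩
  | succ m ih =>
    refine ⟨fun i j => ?_, fun i => ?_⟩
    · rw [pow_succ, Matrix.mul_apply]
      exact Finset.sum_nonneg fun k _ => mul_nonneg (ih.1 i k) (h0 k j)
    · rw [pow_succ]
      simp only [Matrix.mul_apply]
      rw [Finset.sum_comm]
      simp only [← Finset.mul_sum, h1, mul_one]
      exact ih.2 i

lemma pow_fixed {n : ℕ} (Q : Matrix (Fin n) (Fin n) ℝ) (w : Fin n → ℝ)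
    (hw : Q *ᵥ w = w) : ∀ m, (Q ^ m) *ᵥ w = w := by
  intro m
  induction m with
  | zero => simp
  | succ m ih => rw [pow_succ, ← Matrix.mulVec_mulVec, hw, ih]

lemma harmonic_const {n : ℕ} (hn : 0 < n) (Q : Matrix (Fin n) (Fin n) ℝ)
    (h0 : ∀ i j, 0 ≤ Q i j) (h1 : ∀ i, ∑ j, Q i j = 1)
    (hirr : ∀ i j, ∃ m : ℕ, 1 ≤ m ∧ 0 < (Q ^ m) i j)
    (w : Fin n → ℝ) (hw : Q *ᵥ w = w) :
    ∃ c : ℝ, w = fun _ => c := by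
  haveI : Nonempty (Fin n) := ⟨⟨0, hn⟩⟩
  obtain ⟨i₀, hi₀⟩ := Finite.exists_max w
  refine ⟨w i₀, funext fun j => ?_⟩
  obtain ⟨m, hm1, hpos⟩ := hirr i₀ j
  obtain ⟨m, rfl⟩ : ∃ k, m = k + 1 := ⟨m - 1, by omega⟩
  have hQm := stoch_pow Q h0 h1 m
  have hwm := pow_fixed Q w hw (m+1)
  by_contra hne
  have hlt : w j < w i₀ := (hi₀ j).lt_of_ne hne
  have key : w i₀ = ∑ k, (Q ^ (m+1)) i₀ k * w k := by
    conv_lhs => rw [← hwm]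
    rfl
  have hstrict : ∑ k, (Q ^ (m+1)) i₀ k * w k < ∑ k, (Q ^ (m+1)) i₀ k * w i₀ :=
    Finset.sum_lt_sum (fun k _ => mul_le_mul_of_nonneg_left (hi₀ k) (hQm.1 i₀ k))
      ⟨j, Finset.mem_univ j, (mul_lt_mul_iff_right₀ hpos).2 hlt⟩
  rw [← Finset.sum_mul, hQm.2 i₀, one_mul, ← key] at hstrict
  exact lt_irrefl _ hstrict

/-- If `M` satisfies the four Penrose conditions for `L`, then
`L·M = M·L = I − (1/n)·J`; in particular `L` commutes with its Moore–Penrose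
pseudoinverse, i.e., `L` is an EP-matrix. -/
theorem directed_laplacian_EP
    {n : ℕ} (hn : 2 ≤ n)
    (P : Matrix (Fin n) (Fin n) ℝ)
    (hP0 : ∀ i j, 0 ≤ P i j)
    (hProw : ∀ i, ∑ j, P i j = 1)
    (hPirr : ∀ i j, ∃ m : ℕ, 1 ≤ m ∧ 0 < (P ^ m) i j)
    (pv : Fin n → ℝ) (hpv0 : ∀ i, 0 < pv i) (hpvsum : ∑ i, pv i = 1)
    (hstat : pv ᵥ* P = pv)
    (d : ℝ) (hd : 0 < d)
    (L : Matrix (Fin n) (Fin n) ℝ)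
    (hL : L = d • (Matrix.diagonal pv * (1 - P)))
    (J : Matrix (Fin n) (Fin n) ℝ)
    (hJ : J = Matrix.of fun _ _ => (1 : ℝ))
    (M : Matrix (Fin n) (Fin n) ℝ)
    (hM1 : L * M * L = L) (hM2 : M * L * M = M)
    (hM3 : (L * M)ᵀ = L * M) (hM4 : (M * L)ᵀ = M * L) :
    L * M = 1 - (1 / (n : ℝ)) • J ∧ M * L = 1 - (1 / (n : ℝ)) • J ∧ L * M = M * L := by
  have hn0 : 0 < n := by omega
  have hnR : (n : ℝ) ≠ 0 := Nat.cast_ne_zero.mpr (by omega)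
  set D := Matrix.diagonal pv with hD
  set E := Matrix.diagonal (fun i => (pv i)⁻¹) with hE
  have hED : E * D = 1 := by
    have h : (fun i => (pv i)⁻¹ * pv i) = fun _ => (1 : ℝ) :=
      funext fun i => inv_mul_cancel₀ (hpv0 i).ne'
    rw [hE, hD, Matrix.diagonal_mul_diagonal, h, Matrix.diagonal_one]
  have hDE : D * E = 1 := by
    have h : (fun i => pv i * (pv i)⁻¹) = fun _ => (1 : ℝ) :=
      funext fun i => mul_inv_cancel₀ (hpv0 i).ne'
    rw [hD, hE, Matrix.diagonal_mul_diagonal, h, Matrix.diagonal_one]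
  have hstat' : ∀ j, ∑ k, pv k * P k j = pv j := by
    intro j
    have := congrFun hstat j
    simpa [Matrix.vecMul, dotProduct] using this
  -- J facts
  have hPJ : P * J = J := by
    ext i j; simp [hJ, Matrix.mul_apply, hProw]
  have hLJ : L * J = 0 := by
    rw [hL, Matrix.smul_mul, Matrix.mul_assoc, sub_mul, one_mul, hPJ, sub_self,
      Matrix.mul_zero, smul_zero]
  have hJL : J * L = 0 := by
    rw [hL, Matrix.mul_smul]
    have h0 : J * (D * (1 - P)) = 0 := by
      ext i j
      rw [Matrix.mul_apply]
      simp only [hJ, Matrix.of_apply, one_mul, Matrix.zero_apply, hD,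
        Matrix.diagonal_mul, Matrix.sub_apply, Matrix.one_apply, mul_sub, mul_ite, mul_one,
        mul_zero]
      rw [Finset.sum_sub_distrib, Finset.sum_ite_eq' Finset.univ j pv, if_pos (Finset.mem_univ j),
        hstat' j, sub_self]
    rw [h0, smul_zero]
  have hJJ : J * J = (n : ℝ) • J := by
    ext i j
    simp [hJ, Matrix.mul_apply]
  set c : ℝ := 1 / (n : ℝ) with hc
  have hcn : c * (n : ℝ) = 1 := by
    rw [hc, one_div, inv_mul_cancel₀ hnR]
  set Q : Matrix (Fin n) (Fin n) ℝ := 1 - c • J with hQ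
  have hJQ : J * Q = 0 := by
    rw [hQ, Matrix.mul_sub, Matrix.mul_one, Matrix.mul_smul, hJJ, smul_smul, hcn, one_smul,
      sub_self]
  have hQL : Q * L = L := by
    rw [hQ, Matrix.sub_mul, Matrix.one_mul, Matrix.smul_mul, hJL, smul_zero, sub_zero]
  have hLQ : L * Q = L := by
    rw [hQ, Matrix.mul_sub, Matrix.mul_one, Matrix.mul_smul, hLJ, smul_zero, sub_zero]
  have hJT : Jᵀ = J := by ext i j; simp [hJ]
  have hQT : Qᵀ = Q := by
    rw [hQ, Matrix.transpose_sub, Matrix.transpose_one, Matrix.transpose_smul, hJT]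
  -- decomposition of L and its transpose
  have hLT : Lᵀ = d • ((1 - Pᵀ) * D) := by
    rw [hL, Matrix.transpose_smul, Matrix.transpose_mul, Matrix.transpose_sub,
      Matrix.transpose_one, hD, Matrix.diagonal_transpose]
  -- sum of entries of constant vector
  have sum_eq_zero_of_J : ∀ (N : Matrix (Fin n) (Fin n) ℝ) (x : Fin n → ℝ),
      J * N = 0 → ∑ j, (N *ᵥ x) j = 0 := by
    intro N x hJN
    have h4 : J *ᵥ (N *ᵥ x) = 0 := by
      rw [Matrix.mulVec_mulVec, hJN, Matrix.zero_mulVec]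
    have := congrFun h4 ⟨0, hn0⟩
    simpa [hJ, Matrix.mulVec, dotProduct] using this
  ----------------------------------------------------------------
  -- Part 1 : L * M = Q
  ----------------------------------------------------------------
  have hAL : (L * M) * L = L := hM1
  have hJA : J * (L * M) = 0 := by rw [← Matrix.mul_assoc, hJL, Matrix.zero_mul]
  have hNT : (Q - L * M)ᵀ = Q - L * M := by
    rw [Matrix.transpose_sub, hQT, hM3]
  have hNL : (Q - L * M) * L = 0 := by
    rw [Matrix.sub_mul, hQL, hAL, sub_self]
  have hJN : J * (Q - L * M) = 0 := by
    rw [Matrix.mul_sub, hJQ, hJA, sub_self]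
  have hLTN : Lᵀ * (Q - L * M) = 0 := by
    conv_lhs => rw [← hNT]
    rw [← Matrix.transpose_mul, hNL, Matrix.transpose_zero]
  -- the time-reversed chain
  set Pt : Matrix (Fin n) (Fin n) ℝ := E * Pᵀ * D with hPtdef
  have hPtpow : ∀ m : ℕ, Pt ^ (m+1) = E * (P ^ (m+1))ᵀ * D := by
    intro m
    induction m with
    | zero => simp [hPtdef, pow_one]
    | succ m ih =>
      rw [pow_succ, ih, hPtdef]
      simp only [Matrix.mul_assoc]
      rw [← Matrix.mul_assoc D E, hDE, Matrix.one_mul,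
        ← Matrix.mul_assoc ((P ^ (m+1))ᵀ), ← Matrix.transpose_mul, ← pow_succ']
  have hPtentry : ∀ (m : ℕ) i j, (Pt ^ (m+1)) i j = (pv i)⁻¹ * ((P ^ (m+1)) j i * pv j) := by
    intro m i j
    rw [hPtpow m, Matrix.mul_diagonal, hE, Matrix.diagonal_mul, Matrix.transpose_apply,
      mul_assoc]
  have hPtE : ∀ i j, Pt i j = (pv i)⁻¹ * (P j i * pv j) := by
    intro i j
    have := hPtentry 0 i j
    simpa [pow_one] using this
  have hPt0 : ∀ i j, 0 ≤ Pt i j := by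
    intro i j
    rw [hPtE]
    exact mul_nonneg (inv_nonneg.mpr (hpv0 i).le) (mul_nonneg (hP0 j i) (hpv0 j).le)
  have hPtrow : ∀ i, ∑ j, Pt i j = 1 := by
    intro i
    simp only [hPtE]
    rw [← Finset.mul_sum]
    have hsum : ∑ j, P j i * pv j = pv i := by
      rw [← hstat' i]
      exact Finset.sum_congr rfl fun j _ => mul_comm _ _
    rw [hsum, inv_mul_cancel₀ (hpv0 i).ne']
  have hPtirr : ∀ i j, ∃ m : ℕ, 1 ≤ m ∧ 0 < (Pt ^ m) i j := by
    intro i j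
    obtain ⟨m, hm1, hp⟩ := hPirr j i
    obtain ⟨m, rfl⟩ : ∃ k, m = k + 1 := ⟨m - 1, by omega⟩
    refine ⟨m + 1, by omega, ?_⟩
    rw [hPtentry]
    exact mul_pos (inv_pos.mpr (hpv0 i)) (mul_pos hp (hpv0 j))
  have hN1 : Q - L * M = 0 := by
    have key : ∀ x : Fin n → ℝ, (Q - L * M) *ᵥ x = 0 := by
      intro x
      set w := (Q - L * M) *ᵥ x with hwdef
      have h1 : Lᵀ *ᵥ w = 0 := by
        rw [hwdef, Matrix.mulVec_mulVec, hLTN, Matrix.zero_mulVec]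
      rw [hLT, Matrix.smul_mulVec] at h1
      have h3 : ((1 - Pᵀ) * D) *ᵥ w = 0 :=
        (smul_eq_zero.mp h1).resolve_left hd.ne'
      rw [← Matrix.mulVec_mulVec, Matrix.sub_mulVec, Matrix.one_mulVec, sub_eq_zero] at h3
      have hfix : Pt *ᵥ w = w := by
        rw [hPtdef, ← Matrix.mulVec_mulVec, ← Matrix.mulVec_mulVec, ← h3,
          Matrix.mulVec_mulVec, hED, Matrix.one_mulVec]
      obtain ⟨cc, hcc⟩ := harmonic_const hn0 Pt hPt0 hPtrow hPtirr w hfix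
      have hsum := sum_eq_zero_of_J (Q - L * M) x hJN
      rw [← hwdef, hcc] at hsum
      simp only [Finset.sum_const, Finset.card_univ, Fintype.card_fin, nsmul_eq_mul] at hsum
      have hc0 : cc = 0 := by
        rcases mul_eq_zero.mp hsum with h | h
        · exact absurd h hnR
        · exact h
      rw [hcc, hc0]
      rfl
    ext i j
    have := congrFun (key (Pi.single j 1)) i
    rw [Matrix.mulVec_single] at this
    simpa using this
  have hA : L * M = Q := by
    have := sub_eq_zero.mp hN1
    exact this.symm
  ----------------------------------------------------------------
  -- Part 2 : M * L = Q
  ----------------------------------------------------------------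
  have hLB : L * (M * L) = L := by rw [← Matrix.mul_assoc, hM1]
  have hBJ : (M * L) * J = 0 := by rw [Matrix.mul_assoc, hLJ, Matrix.mul_zero]
  have hJB : J * (M * L) = 0 := by
    have : (M * L * J)ᵀ = 0 := by rw [hBJ, Matrix.transpose_zero]
    rw [Matrix.transpose_mul, hJT, hM4] at this
    exact this
  have hNT' : (Q - M * L)ᵀ = Q - M * L := by
    rw [Matrix.transpose_sub, hQT, hM4]
  have hLN' : L * (Q - M * L) = 0 := by
    rw [Matrix.mul_sub, hLQ, hLB, sub_self]
  have hJN' : J * (Q - M * L) = 0 := by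
    rw [Matrix.mul_sub, hJQ, hJB, sub_self]
  have hN2 : Q - M * L = 0 := by
    have key : ∀ x : Fin n → ℝ, (Q - M * L) *ᵥ x = 0 := by
      intro x
      set w := (Q - M * L) *ᵥ x with hwdef
      have h1 : L *ᵥ w = 0 := by
        rw [hwdef, Matrix.mulVec_mulVec, hLN', Matrix.zero_mulVec]
      rw [hL, Matrix.smul_mulVec] at h1
      have h3 : (D * (1 - P)) *ᵥ w = 0 :=
        (smul_eq_zero.mp h1).resolve_left hd.ne'
      have h4 : (1 - P) *ᵥ w = 0 := by
        have := congrArg (fun v => E *ᵥ v) h3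
        simpa [Matrix.mulVec_mulVec, ← Matrix.mul_assoc, hED] using this
      rw [Matrix.sub_mulVec, Matrix.one_mulVec, sub_eq_zero] at h4
      obtain ⟨cc, hcc⟩ := harmonic_const hn0 P hP0 hProw hPirr w h4.symm
      have hsum := sum_eq_zero_of_J (Q - M * L) x hJN'
      rw [← hwdef, hcc] at hsum
      simp only [Finset.sum_const, Finset.card_univ, Fintype.card_fin, nsmul_eq_mul] at hsum
      have hc0 : cc = 0 := by
        rcases mul_eq_zero.mp hsum with h | h
        · exact absurd h hnR
        · exact h
      rw [hcc, hc0]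
      rfl
    ext i j
    have := congrFun (key (Pi.single j 1)) i
    rw [Matrix.mulVec_single] at this
    simpa using this
  have hB : M * L = Q := (sub_eq_zero.mp hN2).symm
  exact ⟨hA, hB, by rw [hA, hB]⟩
end

section
/- For every nonempty proper subset X of the index set {1,…,n}, the principal submatrix L_{\X} is invertible, and every entry of its inverse (L_{\X})⁻¹ is nonnegative. -/
open Matrix BigOperators

/-- Entries of powers of an entrywise-nonnegative matrix are nonnegative. -/
lemma pow_entry_nonneg {ι : Type*} [Fintype ι] [DecidableEq ι]
    (Q : Matrix ι ι ℝ) (hQ0 : ∀ i j, 0 ≤ Q i j) :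
    ∀ m i j, 0 ≤ (Q ^ m) i j := by
  intro m
  induction m with
  | zero =>
    intro i j
    simp [Matrix.one_apply]
    split <;> norm_num
  | succ m ih =>
    intro i j
    rw [pow_succ, Matrix.mul_apply]
    exact Finset.sum_nonneg fun k _ => mul_nonneg (ih i k) (hQ0 k j)

/-- If `Q` is entrywise nonnegative with row sums `≤ 1`, and some power has all row
sums `< 1`, then `1 - Q` has an entrywise-nonnegative right inverse. -/
lemma substochastic_one_sub_right_inv {ι : Type*} [Fintype ι] [DecidableEq ι]
    (Q : Matrix ι ι ℝ) (hQ0 : ∀ i j, 0 ≤ Q i j)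
    (hrow : ∀ i, ∑ j, Q i j ≤ 1)
    (N : ℕ) (hN : ∀ i, ∑ j, (Q ^ N) i j < 1) :
    ∃ W : Matrix ι ι ℝ, (1 - Q) * W = 1 ∧ ∀ i j, 0 ≤ W i j := by
  rcases isEmpty_or_nonempty ι with h | h
  · exact ⟨1, Subsingleton.elim _ _, fun i j => (IsEmpty.false i).elim⟩
  set A : Matrix ι ι ℝ := Q ^ N with hA
  have hA0 : ∀ i j, 0 ≤ A i j := fun i j => pow_entry_nonneg Q hQ0 N i j
  have hAm0 : ∀ m i j, 0 ≤ (A ^ m) i j := fun m => pow_entry_nonneg A hA0 m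
  -- epsilon : maximum row sum of A
  set ε : ℝ := Finset.univ.sup' (Finset.univ_nonempty) (fun i => ∑ j, A i j) with hε
  have hεlt : ε < 1 := by
    rw [hε]
    exact (Finset.sup'_lt_iff Finset.univ_nonempty).mpr fun i _ => hN i
  have hεrow : ∀ i, ∑ j, A i j ≤ ε := fun i =>
    Finset.le_sup' (fun i => ∑ j, A i j) (Finset.mem_univ i)
  have hε0 : 0 ≤ ε := by
    obtain ⟨i⟩ := h
    exact le_trans (Finset.sum_nonneg fun j _ => hA0 i j) (hεrow i)
  -- row sums of A^m bounded by ε^m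
  have hrowpow : ∀ m i, ∑ j, (A ^ m) i j ≤ ε ^ m := by
    intro m
    induction m with
    | zero => intro i; simp [Matrix.one_apply]
    | succ m ih =>
      intro i
      have : ∑ j, (A ^ (m + 1)) i j = ∑ k, A i k * ∑ j, (A ^ m) k j := by
        rw [pow_succ']
        simp only [Matrix.mul_apply]
        rw [Finset.sum_comm]
        simp [Finset.mul_sum]
      rw [this]
      calc ∑ k, A i k * ∑ j, (A ^ m) k j ≤ ∑ k, A i k * ε ^ m := by
            refine Finset.sum_le_sum fun k _ => mul_le_mul_of_nonneg_left (ih k) (hA0 i k)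
        _ = (∑ k, A i k) * ε ^ m := by rw [Finset.sum_mul]
        _ ≤ ε * ε ^ m := mul_le_mul_of_nonneg_right (hεrow i) (pow_nonneg hε0 m)
        _ = ε ^ (m + 1) := (pow_succ' ε m).symm
  have hentry : ∀ m i j, (A ^ m) i j ≤ ε ^ m := by
    intro m i j
    calc (A ^ m) i j ≤ ∑ k, (A ^ m) i k :=
          Finset.single_le_sum (fun k _ => hAm0 m i k) (Finset.mem_univ j)
      _ ≤ ε ^ m := hrowpow m i
  have hsum : ∀ i j, Summable (fun m => (A ^ m) i j) := by
    intro i j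
    exact Summable.of_nonneg_of_le (fun m => hAm0 m i j) (fun m => hentry m i j)
      (summable_geometric_of_lt_one hε0 hεlt)
  -- V = Neumann series of A
  set V : Matrix ι ι ℝ := Matrix.of (fun i j => ∑' m, (A ^ m) i j) with hV
  have hV0 : ∀ i j, 0 ≤ V i j := fun i j => tsum_nonneg (fun m => hAm0 m i j)
  have hAV : (1 - A) * V = 1 := by
    ext i j
    rw [Matrix.sub_mul, Matrix.one_mul, Matrix.sub_apply]
    have h1 : (A * V) i j = ∑' m, (A ^ (m + 1)) i j := by
      rw [Matrix.mul_apply]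
      have : ∀ k, (fun m => A i k * (A ^ m) k j) = fun m => A i k * (A ^ m) k j := fun _ => rfl
      calc ∑ k, A i k * V k j = ∑ k, ∑' m, A i k * (A ^ m) k j := by
            refine Finset.sum_congr rfl fun k _ => ?_
            rw [hV, Matrix.of_apply, ← tsum_mul_left]
        _ = ∑' m, ∑ k, A i k * (A ^ m) k j := by
            rw [Summable.tsum_finsetSum]
            intro k _
            exact (hsum k j).mul_left _
        _ = ∑' m, (A ^ (m + 1)) i j := by
            refine tsum_congr fun m => ?_
            rw [pow_succ', Matrix.mul_apply]
    rw [h1]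
    have h2 : V i j = (A ^ 0) i j + ∑' m, (A ^ (m + 1)) i j := Summable.tsum_eq_zero_add (hsum i j)
    rw [hV] at h2 ⊢
    simp only [Matrix.of_apply] at h2 ⊢
    rw [h2]
    simp [Matrix.one_apply]
  -- geometric sum B
  set B : Matrix ι ι ℝ := ∑ k ∈ Finset.range N, Q ^ k with hB
  have hB0 : ∀ i j, 0 ≤ B i j := by
    intro i j
    rw [hB]
    simp only [Matrix.sum_apply]
    exact Finset.sum_nonneg fun k _ => pow_entry_nonneg Q hQ0 k i j
  have hgeom : (1 - Q) * B = 1 - A := by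
    have hcomm : Q * B = B * Q := by
      rw [hB, Finset.sum_mul, Finset.mul_sum]
      exact Finset.sum_congr rfl fun k _ => by rw [← pow_succ, ← pow_succ']
    have h3 : B * (Q - 1) = Q ^ N - 1 := geom_sum_mul Q N
    rw [Matrix.mul_sub, Matrix.mul_one] at h3
    rw [Matrix.sub_mul, Matrix.one_mul, hA, hcomm]
    have h4 := congrArg Neg.neg h3
    simpa [neg_sub] using h4
  refine ⟨B * V, ?_, fun i j => ?_⟩
  · rw [← Matrix.mul_assoc, hgeom, hAV]
  · rw [Matrix.mul_apply]
    exact Finset.sum_nonneg fun k _ => mul_nonneg (hB0 i k) (hV0 k j)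

/-- For every nonempty proper subset `X` of the index set, the principal
submatrix `L_{\X}` (rows and columns with indices in `X` deleted) is invertible, and
every entry of its inverse is nonnegative. -/
theorem directed_laplacian_grounded_submatrix_inverse_nonneg
    {n : ℕ} (hn : 2 ≤ n)
    (P : Matrix (Fin n) (Fin n) ℝ)
    (hP0 : ∀ i j, 0 ≤ P i j)
    (hProw : ∀ i, ∑ j, P i j = 1)
    (hPirr : ∀ i j, ∃ m : ℕ, 1 ≤ m ∧ 0 < (P ^ m) i j)
    (pv : Fin n → ℝ) (hpv0 : ∀ i, 0 < pv i) (hpvsum : ∑ i, pv i = 1)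
    (hstat : pv ᵥ* P = pv)
    (d : ℝ) (hd : 0 < d)
    (L : Matrix (Fin n) (Fin n) ℝ)
    (hL : L = d • (Matrix.diagonal pv * (1 - P)))
    (X : Finset (Fin n)) (hX : X.Nonempty) (hXproper : X ≠ Finset.univ)
    (LX : Matrix {i : Fin n // i ∉ X} {i : Fin n // i ∉ X} ℝ)
    (hLX : LX = L.submatrix Subtype.val Subtype.val) :
    IsUnit LX ∧ ∀ i j, 0 ≤ LX⁻¹ i j := by
  classical
  have hne : ∃ y, y ∉ X := by
    by_contra hc
    push_neg at hc
    exact hXproper (Finset.eq_univ_iff_forall.mpr hc)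
  obtain ⟨y, hy⟩ := hne
  haveI : Nonempty {i : Fin n // i ∉ X} := ⟨⟨y, hy⟩⟩
  set Q : Matrix {i : Fin n // i ∉ X} {i : Fin n // i ∉ X} ℝ :=
    P.submatrix Subtype.val Subtype.val with hQ
  have hQ0 : ∀ i j, 0 ≤ Q i j := fun i j => hP0 i.val j.val
  -- sums over the subtype are sums over Xᶜ
  have hsub : ∀ f : Fin n → ℝ, ∑ j : {i : Fin n // i ∉ X}, f j.val = ∑ j ∈ Xᶜ, f j :=
    fun f => (Finset.sum_subtype Xᶜ (fun x => Finset.mem_compl) f).symm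
  -- powers of P are nonneg with row sums 1
  have hP0m : ∀ m i j, 0 ≤ (P ^ m) i j := pow_entry_nonneg P hP0
  have hProwm : ∀ m i, ∑ j, (P ^ m) i j = 1 := by
    intro m
    induction m with
    | zero => intro i; simp [Matrix.one_apply]
    | succ m ih =>
      intro i
      rw [pow_succ']
      simp only [Matrix.mul_apply]
      rw [Finset.sum_comm]
      calc ∑ k, ∑ j, P i k * (P ^ m) k j = ∑ k, P i k * ∑ j, (P ^ m) k j := by
            simp [Finset.mul_sum]
        _ = ∑ k, P i k := by simp [ih]
        _ = 1 := hProw i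
  -- entries of Q^m dominated by entries of P^m
  have hQP : ∀ m (i j : {i : Fin n // i ∉ X}), (Q ^ m) i j ≤ (P ^ m) i.val j.val := by
    intro m
    induction m with
    | zero =>
      intro i j
      simp only [pow_zero, Matrix.one_apply]
      rcases eq_or_ne i j with h | h
      · simp [h]
      · rw [if_neg h, if_neg (fun hv => h (Subtype.ext hv))]
    | succ m ih =>
      intro i j
      rw [pow_succ, pow_succ, Matrix.mul_apply, Matrix.mul_apply]
      calc ∑ k, (Q ^ m) i k * Q k j
            ≤ ∑ k : {i : Fin n // i ∉ X}, (P ^ m) i.val k.val * P k.val j.val := by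
            refine Finset.sum_le_sum fun k _ => ?_
            exact mul_le_mul_of_nonneg_right (ih i k) (hQ0 k j)
        _ = ∑ k ∈ Xᶜ, (P ^ m) i.val k * P k j.val :=
            hsub (fun k : Fin n => (P ^ m) i.val k * P k j.val)
        _ ≤ ∑ k, (P ^ m) i.val k * P k j.val := by
            refine Finset.sum_le_sum_of_subset_of_nonneg (Finset.subset_univ _) ?_
            exact fun k _ _ => mul_nonneg (hP0m m i.val k) (hP0 k j.val)
  have hQm0 : ∀ m (i j : {i : Fin n // i ∉ X}), 0 ≤ (Q ^ m) i j := pow_entry_nonneg Q hQ0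
  -- Q has row sums ≤ 1
  have hQrow : ∀ i : {i : Fin n // i ∉ X}, ∑ j, Q i j ≤ 1 := by
    intro i
    calc ∑ j, Q i j = ∑ j ∈ Xᶜ, P i.val j := hsub (fun j => P i.val j)
      _ ≤ ∑ j, P i.val j :=
          Finset.sum_le_sum_of_subset_of_nonneg (Finset.subset_univ _)
            (fun j _ _ => hP0 i.val j)
      _ = 1 := hProw i.val
  -- row sums of Q^m are nonincreasing in m
  have hmono : ∀ (m t : ℕ) (i : {i : Fin n // i ∉ X}), ∑ j, (Q ^ (m + t)) i j ≤ ∑ j, (Q ^ m) i j := by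
    intro m t
    induction t with
    | zero => intro i; exact le_refl _
    | succ t ih =>
      intro i
      have hstep : ∑ j, (Q ^ (m + t + 1)) i j ≤ ∑ j, (Q ^ (m + t)) i j := by
        rw [pow_succ]
        simp only [Matrix.mul_apply]
        rw [Finset.sum_comm]
        calc ∑ l, ∑ j, (Q ^ (m + t)) i l * Q l j
            = ∑ l, (Q ^ (m + t)) i l * ∑ j, Q l j := by simp [Finset.mul_sum]
          _ ≤ ∑ l, (Q ^ (m + t)) i l * 1 := by
              refine Finset.sum_le_sum fun l _ =>
                mul_le_mul_of_nonneg_left (hQrow l) (hQm0 _ i l)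
          _ = ∑ l, (Q ^ (m + t)) i l := by simp
      exact le_trans hstep (ih i)
  -- choose a power with all row sums < 1
  obtain ⟨x, hx⟩ := hX
  choose m hm1 hm2 using fun i : {i : Fin n // i ∉ X} => hPirr i.val x
  set N : ℕ := Finset.univ.sup m with hNdef
  have hmN : ∀ i : {i : Fin n // i ∉ X}, m i ≤ N := fun i => Finset.le_sup (Finset.mem_univ i)
  have hNlt : ∀ i : {i : Fin n // i ∉ X}, ∑ j, (Q ^ N) i j < 1 := by
    intro i
    have h1 : ∑ j, (Q ^ N) i j ≤ ∑ j, (Q ^ (m i)) i j := by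
      have := hmono (m i) (N - m i) i
      rwa [Nat.add_sub_cancel' (hmN i)] at this
    have h2 : ∑ j, (Q ^ (m i)) i j ≤ ∑ j ∈ Xᶜ, (P ^ (m i)) i.val j := by
      rw [← hsub (fun j => (P ^ (m i)) i.val j)]
      exact Finset.sum_le_sum fun j _ => hQP (m i) i j
    have h3 : ∑ j ∈ Xᶜ, (P ^ (m i)) i.val j = 1 - ∑ j ∈ X, (P ^ (m i)) i.val j := by
      have := Finset.sum_compl_add_sum X fun j => (P ^ (m i)) i.val j
      rw [hProwm (m i) i.val] at this
      linarith
    have h4 : (P ^ (m i)) i.val x ≤ ∑ j ∈ X, (P ^ (m i)) i.val j :=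
      Finset.single_le_sum (fun j _ => hP0m (m i) i.val j) hx
    have h5 : (0:ℝ) < (P ^ (m i)) i.val x := hm2 i
    calc ∑ j, (Q ^ N) i j ≤ ∑ j, (Q ^ (m i)) i j := h1
      _ ≤ ∑ j ∈ Xᶜ, (P ^ (m i)) i.val j := h2
      _ = 1 - ∑ j ∈ X, (P ^ (m i)) i.val j := h3
      _ < 1 := by linarith
  obtain ⟨W, hW1, hW0⟩ := substochastic_one_sub_right_inv Q hQ0 hQrow N hNlt
  -- decompose LX
  have hLXeq : LX = d • (Matrix.diagonal (fun i : {i : Fin n // i ∉ X} => pv i.val) * (1 - Q)) := by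
    ext i j
    rw [hLX, hL]
    simp only [Matrix.submatrix_apply, Matrix.smul_apply, smul_eq_mul,
      Matrix.diagonal_mul, Matrix.sub_apply, Matrix.one_apply, hQ]
    rcases eq_or_ne i j with h | h
    · simp [h]
    · rw [if_neg h, if_neg (show ¬(i : Fin n) = (j : Fin n) from fun hv => h (Subtype.ext hv))]
  set Dinv : Matrix {i : Fin n // i ∉ X} {i : Fin n // i ∉ X} ℝ := Matrix.diagonal (fun i : {i : Fin n // i ∉ X} => (pv i.val)⁻¹) with hDinv
  set R : Matrix {i : Fin n // i ∉ X} {i : Fin n // i ∉ X} ℝ := d⁻¹ • (W * Dinv) with hR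
  have h1 : LX * R = 1 := by
    rw [hLXeq, hR, Matrix.smul_mul, Matrix.mul_smul, smul_smul,
      mul_inv_cancel₀ hd.ne', one_smul, Matrix.mul_assoc,
      ← Matrix.mul_assoc (1 - Q), hW1, Matrix.one_mul, hDinv,
      Matrix.diagonal_mul_diagonal]
    have : (fun i : {i : Fin n // i ∉ X} => pv i.val * (pv i.val)⁻¹) = fun _ => (1:ℝ) :=
      funext fun i => mul_inv_cancel₀ (hpv0 i.val).ne'
    rw [this, Matrix.diagonal_one]
  have h2 : R * LX = 1 := mul_eq_one_comm.mp h1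
  refine ⟨⟨⟨LX, R, h1, h2⟩, rfl⟩, ?_⟩
  rw [Matrix.inv_eq_right_inv h1]
  intro i j
  rw [hR]
  simp only [Matrix.smul_apply, smul_eq_mul, hDinv, Matrix.mul_diagonal]
  exact mul_nonneg (inv_nonneg.mpr hd.le)
    (mul_nonneg (hW0 i j) (inv_nonneg.mpr (hpv0 j.val).le))
end

section
/- For any index k, the (n−1)×(n−1) matrix L_{\{k}} is invertible and (L_{\{k}})⁻¹ = (I + 𝟏𝟏ᵀ)·(L†)_{\{k}}·(I + 𝟏𝟏ᵀ), where (L†)_{\{k}} is the principal submatrix of the Moore–Penrose pseudoinverse L† obtained by deleting its k-th row and k-th column, and I and 𝟏 have dimension n−1. -/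
open Matrix BigOperators

private lemma aux_sum_subtype_ne {n : ℕ} (k : Fin n) (f : Fin n → ℝ) :
    ∑ l : {i : Fin n // i ≠ k}, f l.val = (∑ l, f l) - f k := by
  rw [← Finset.sum_subtype (Finset.univ.erase k) (fun x => by simp) f]
  rw [Finset.sum_erase_eq_sub (Finset.mem_univ k)]

/-- A harmonic function of an irreducible stochastic matrix is constant. -/
private lemma aux_harmonic_const {n : ℕ}
    (P : Matrix (Fin n) (Fin n) ℝ)
    (hP0 : ∀ i j, 0 ≤ P i j)
    (hProw : ∀ i, ∑ j, P i j = 1)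
    (hPirr : ∀ i j, ∃ m : ℕ, 1 ≤ m ∧ 0 < (P ^ m) i j)
    (v : Fin n → ℝ) (hv : P *ᵥ v = v) :
    ∀ i j, v i = v j := by
  rcases Nat.eq_zero_or_pos n with hn | hn
  · intro i; exact absurd i.2 (by omega)
  have hpow : ∀ m : ℕ, (∀ i j, 0 ≤ (P ^ m) i j) ∧ (∀ i, ∑ j, (P ^ m) i j = 1) ∧
      (P ^ m) *ᵥ v = v := by
    intro m
    induction m with
    | zero =>
      refine ⟨fun i j => ?_, fun i => ?_, by simp⟩
      · simp [Matrix.one_apply]; split <;> norm_num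
      · simp [Matrix.one_apply]
    | succ m ih =>
      obtain ⟨h0, hrow, hmv⟩ := ih
      rw [pow_succ]
      refine ⟨fun i j => ?_, fun i => ?_, ?_⟩
      · rw [Matrix.mul_apply]
        exact Finset.sum_nonneg fun l _ => mul_nonneg (h0 i l) (hP0 l j)
      · simp only [Matrix.mul_apply]
        rw [Finset.sum_comm]
        calc ∑ l, ∑ j, (P ^ m) i l * P l j = ∑ l, (P ^ m) i l * ∑ j, P l j := by
              simp [Finset.mul_sum]
          _ = 1 := by simp [hProw, hrow i]
      · rw [← Matrix.mulVec_mulVec, hv, hmv]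
  -- take the maximizer
  haveI : Nonempty (Fin n) := ⟨⟨0, hn⟩⟩
  obtain ⟨i0, hi0⟩ := Finite.exists_max v
  have hall : ∀ j, v j = v i0 := by
    intro j
    obtain ⟨m, -, hm⟩ := hPirr i0 j
    obtain ⟨h0, hrow, hmv⟩ := hpow m
    have hsum : ∑ l, (P ^ m) i0 l * (v i0 - v l) = 0 := by
      have h1 : ∑ l, (P ^ m) i0 l * v l = v i0 := by
        have := congrFun hmv i0
        simpa [Matrix.mulVec, dotProduct] using this
      have h2 : ∑ l, (P ^ m) i0 l * v i0 = v i0 := by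
        rw [← Finset.sum_mul, hrow i0, one_mul]
      simp only [mul_sub]
      rw [Finset.sum_sub_distrib, h1, h2, sub_self]
    have hterm : (P ^ m) i0 j * (v i0 - v j) = 0 := by
      have := (Finset.sum_eq_zero_iff_of_nonneg
        (fun l _ => mul_nonneg (h0 i0 l) (sub_nonneg.mpr (hi0 l)))).mp hsum
      exact this j (Finset.mem_univ j)
    have : v i0 - v j = 0 := by
      rcases mul_eq_zero.mp hterm with h | h
      · exact absurd h (ne_of_gt hm)
      · exact h
    linarith
  intro i j; rw [hall i, hall j]

/-- For any index `k`, the submatrix `L_{\{k}}` is invertible and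
`(L_{\{k}})⁻¹ = (I + 𝟏𝟏ᵀ) (L†)_{\{k}} (I + 𝟏𝟏ᵀ)`, where `(L†)_{\{k}}` is the principal
submatrix of the Moore–Penrose pseudoinverse `L†` obtained by deleting the `k`-th row
and column, and `I`, `𝟏` have dimension `n − 1`. -/
theorem directed_laplacian_submatrix_inverse_via_pseudoinverse
    {n : ℕ} (hn : 2 ≤ n)
    (P : Matrix (Fin n) (Fin n) ℝ)
    (hP0 : ∀ i j, 0 ≤ P i j)
    (hProw : ∀ i, ∑ j, P i j = 1)
    (hPirr : ∀ i j, ∃ m : ℕ, 1 ≤ m ∧ 0 < (P ^ m) i j)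
    (pv : Fin n → ℝ) (hpv0 : ∀ i, 0 < pv i) (hpvsum : ∑ i, pv i = 1)
    (hstat : pv ᵥ* P = pv)
    (d : ℝ) (hd : 0 < d)
    (L : Matrix (Fin n) (Fin n) ℝ)
    (hL : L = d • (Matrix.diagonal pv * (1 - P)))
    (M : Matrix (Fin n) (Fin n) ℝ)
    (hM1 : L * M * L = L) (hM2 : M * L * M = M)
    (hM3 : (L * M)ᵀ = L * M) (hM4 : (M * L)ᵀ = M * L)
    (k : Fin n)
    (Lk : Matrix {i : Fin n // i ≠ k} {i : Fin n // i ≠ k} ℝ)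
    (hLk : Lk = L.submatrix Subtype.val Subtype.val)
    (Mk : Matrix {i : Fin n // i ≠ k} {i : Fin n // i ≠ k} ℝ)
    (hMk : Mk = M.submatrix Subtype.val Subtype.val)
    (Jk : Matrix {i : Fin n // i ≠ k} {i : Fin n // i ≠ k} ℝ)
    (hJk : Jk = Matrix.of fun _ _ => (1 : ℝ)) :
    IsUnit Lk ∧ Lk⁻¹ = (1 + Jk) * Mk * (1 + Jk) := by
  set u : Fin n → ℝ := fun _ => 1 with hu
  -- row sums of L are zero
  have hL1 : L *ᵥ u = 0 := by
    have hPu : P *ᵥ u = u := by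
      funext i
      simp [Matrix.mulVec, dotProduct, hu, hProw i]
    rw [hL, Matrix.smul_mulVec, ← Matrix.mulVec_mulVec,
      Matrix.sub_mulVec, Matrix.one_mulVec, hPu, sub_self, Matrix.mulVec_zero, smul_zero]
  -- column sums of L are zero
  have h1diag : u ᵥ* Matrix.diagonal pv = pv := by
    funext j; rw [Matrix.vecMul_diagonal]; simp [hu]
  have h1L : u ᵥ* L = 0 := by
    rw [← Matrix.mulVec_transpose, hL, Matrix.transpose_smul, Matrix.smul_mulVec,
      Matrix.mulVec_transpose, ← Matrix.vecMul_vecMul, h1diag, Matrix.vecMul_sub,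
      Matrix.vecMul_one, hstat, sub_self, smul_zero]
  -- column sums of M are zero
  have h1M : u ᵥ* M = 0 := by
    have hML1 : u ᵥ* (M * L) = 0 := by
      rw [← hM4, Matrix.vecMul_transpose, ← Matrix.mulVec_mulVec, hL1, Matrix.mulVec_zero]
    calc u ᵥ* M = u ᵥ* (M * L * M) := by rw [hM2]
      _ = (u ᵥ* (M * L)) ᵥ* M := by rw [Matrix.vecMul_vecMul]
      _ = 0 := by rw [hML1, Matrix.zero_vecMul]
  -- row sums of M are zero
  have hM1' : M *ᵥ u = 0 := by
    have hLM1 : (L * M) *ᵥ u = 0 := by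
      rw [← hM3, Matrix.mulVec_transpose, ← Matrix.vecMul_vecMul, h1L, Matrix.zero_vecMul]
    calc M *ᵥ u = (M * (L * M)) *ᵥ u := by rw [← Matrix.mul_assoc, hM2]
      _ = M *ᵥ ((L * M) *ᵥ u) := by rw [← Matrix.mulVec_mulVec]
      _ = 0 := by rw [hLM1, Matrix.mulVec_zero]
  -- kernel of L consists of constants
  have hker : ∀ v : Fin n → ℝ, L *ᵥ v = 0 → ∀ i j, v i = v j := by
    intro v hv
    have hPv : P *ᵥ v = v := by
      funext i
      have := congrFun hv i
      rw [hL, Matrix.smul_mulVec, ← Matrix.mulVec_mulVec] at this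
      have hdiag := this
      simp only [Pi.smul_apply, Pi.zero_apply, smul_eq_mul] at hdiag
      rw [Matrix.mulVec_diagonal] at hdiag
      have h0 : ((1 - P) *ᵥ v) i = 0 := by
        rcases mul_eq_zero.mp hdiag with h | h
        · exact absurd h (ne_of_gt hd)
        · rcases mul_eq_zero.mp h with h' | h'
          · exact absurd h' (ne_of_gt (hpv0 i))
          · exact h'
      rw [Matrix.sub_mulVec, Matrix.one_mulVec] at h0
      have := sub_eq_zero.mp (by simpa using h0)
      exact this.symm
    exact aux_harmonic_const P hP0 hProw hPirr v hPv
  -- columns of 1 - M * L are constant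
  have hQ : ∀ i j : Fin n, ((1 : Matrix (Fin n) (Fin n) ℝ) - M * L) i j
      = ((1 : Matrix (Fin n) (Fin n) ℝ) - M * L) k j := by
    intro i j
    set Q : Matrix (Fin n) (Fin n) ℝ := 1 - M * L with hQdef
    have hLQ : L * Q = 0 := by
      rw [hQdef, Matrix.mul_sub, Matrix.mul_one, ← Matrix.mul_assoc, hM1, sub_self]
    have hcol : L *ᵥ (fun i => Q i j) = 0 := by
      funext a
      have : (L * Q) a j = 0 := by rw [hLQ]; rfl
      rw [Matrix.mul_apply] at this
      simpa [Matrix.mulVec, dotProduct] using this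
    exact hker _ hcol i k
  have hML : ∀ i j : Fin n, (M * L) i j - (M * L) k j
      = (if i = j then (1:ℝ) else 0) - (if k = j then (1:ℝ) else 0) := by
    intro i j
    have := hQ i j
    simp only [Matrix.sub_apply, Matrix.one_apply] at this
    linarith [this]
  -- key computation: left inverse
  have hMrow : ∀ i : Fin n, ∑ b, M i b = 0 := by
    intro i
    have := congrFun hM1' i
    simpa [Matrix.mulVec, dotProduct, hu] using this
  have hMcol : ∀ b : Fin n, ∑ a, M a b = 0 := by
    intro b
    have := congrFun h1M b
    simpa [Matrix.vecMul, dotProduct, hu] using this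
  have hLcol : ∀ j : Fin n, ∑ l, L l j = 0 := by
    intro j
    have := congrFun h1L j
    simpa [Matrix.vecMul, dotProduct, hu] using this
  have hA : ∀ i b : {i : Fin n // i ≠ k}, ((1 + Jk) * Mk) i b
      = M i.val b.val - M k b.val := by
    intro i b
    rw [Matrix.mul_apply]
    have he : ∀ a : {i : Fin n // i ≠ k}, (1 + Jk) i a * Mk a b
        = (if i = a then M a.val b.val else 0) + M a.val b.val := by
      intro a
      rw [hJk, hMk, Matrix.add_apply, Matrix.one_apply, Matrix.submatrix_apply,
        Matrix.of_apply]
      split <;> ring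
    rw [Finset.sum_congr rfl (fun a _ => he a), Finset.sum_add_distrib,
      Finset.sum_ite_eq (Finset.univ : Finset {i : Fin n // i ≠ k}) i
        (fun a => M a.val b.val),
      aux_sum_subtype_ne k (fun a => M a b.val), hMcol b.val]
    simp only [Finset.mem_univ, if_true, zero_sub]
    ring
  have hB : ∀ i l : {i : Fin n // i ≠ k}, ((1 + Jk) * Mk * (1 + Jk)) i l
      = M i.val l.val - M k l.val - M i.val k + M k k := by
    intro i l
    rw [Matrix.mul_apply]
    have he : ∀ b : {i : Fin n // i ≠ k}, ((1 + Jk) * Mk) i b * (1 + Jk) b l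
        = (if b = l then M i.val b.val - M k b.val else 0)
          + (M i.val b.val - M k b.val) := by
      intro b
      rw [hA i b, hJk, Matrix.add_apply, Matrix.one_apply, Matrix.of_apply]
      split <;> ring
    rw [Finset.sum_congr rfl (fun b _ => he b), Finset.sum_add_distrib,
      Finset.sum_ite_eq' (Finset.univ : Finset {i : Fin n // i ≠ k}) l
        (fun b => M i.val b.val - M k b.val),
      aux_sum_subtype_ne k (fun b => M i.val b - M k b),
      Finset.sum_sub_distrib, hMrow i.val, hMrow k]
    simp
    ring
  have hkey : ((1 + Jk) * Mk * (1 + Jk)) * Lk = 1 := by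
    ext i j
    rw [Matrix.mul_apply]
    have : ∀ l : {i : Fin n // i ≠ k}, ((1 + Jk) * Mk * (1 + Jk)) i l * Lk l j
        = (M i.val l.val - M k l.val - M i.val k + M k k) * L l.val j.val := by
      intro l
      rw [hB i l, hLk, Matrix.submatrix_apply]
    rw [Finset.sum_congr rfl (fun l _ => this l)]
    rw [aux_sum_subtype_ne k (fun l => (M i.val l - M k l - M i.val k + M k k) * L l j.val)]
    have hzero : (M i.val k - M k k - M i.val k + M k k) * L k j.val = 0 := by ring_nf
    rw [hzero, sub_zero]
    have hexp : ∀ l : Fin n, (M i.val l - M k l - M i.val k + M k k) * L l j.val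
        = M i.val l * L l j.val - M k l * L l j.val
          - (M i.val k - M k k) * L l j.val := by intro l; ring
    rw [Finset.sum_congr rfl (fun l _ => hexp l), Finset.sum_sub_distrib,
      Finset.sum_sub_distrib, ← Finset.mul_sum, hLcol j.val, mul_zero, sub_zero]
    have h1 : ∑ l, M i.val l * L l j.val = (M * L) i.val j.val := (Matrix.mul_apply).symm
    have h2 : ∑ l, M k l * L l j.val = (M * L) k j.val := (Matrix.mul_apply).symm
    rw [h1, h2, hML i.val j.val]
    have hkj : ¬ (k = j.val) := fun h => j.2 h.symm
    simp [Matrix.one_apply, Subtype.ext_iff, hkj]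
  constructor
  · exact (Matrix.isUnit_iff_isUnit_det Lk).mpr (Matrix.isUnit_det_of_left_inverse hkey)
  · exact Matrix.inv_eq_left_inv hkey
end

section
/- The resistance distance Ω is a metric on the index set {1,…,n}: (1) Ω(i,j) ≥ 0 for all i, j, with Ω(i,j) = 0 if and only if i = j; (2) Ω(i,j) = Ω(j,i) for all i, j; (3) Ω(i,j) ≤ Ω(i,k) + Ω(k,j) for all i, j, k. -/
open Matrix BigOperators

/-- Maximum principle: if `u` is sub-harmonic at every node except `i` for an irreducible
row-stochastic matrix `P`, then `u` attains its maximum at `i`. -/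
lemma resist_max_principle {n : ℕ} (P : Matrix (Fin n) (Fin n) ℝ)
    (hP0 : ∀ i j, 0 ≤ P i j) (hProw : ∀ i, ∑ j, P i j = 1)
    (hPirr : ∀ i j, ∃ m : ℕ, 1 ≤ m ∧ 0 < (P ^ m) i j)
    (u : Fin n → ℝ) (i : Fin n)
    (hh : ∀ a, a ≠ i → u a ≤ ∑ l, P a l * u l) :
    ∀ a, u a ≤ u i := by
  have hpow : ∀ k : ℕ, ∀ a b, 0 ≤ (P ^ k) a b := by
    intro k
    induction k with
    | zero => intro a b; by_cases h : a = b <;> simp [pow_zero, Matrix.one_apply, h]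
    | succ k ih =>
      intro a b
      rw [pow_succ, Matrix.mul_apply]
      exact Finset.sum_nonneg fun c _ => mul_nonneg (ih a c) (hP0 c b)
  obtain ⟨a₀, -, ha₀⟩ := Finset.exists_max_image Finset.univ u ⟨i, Finset.mem_univ i⟩
  have key : ∀ k : ℕ, ∀ b, 0 < (P ^ k) a₀ b → u b = u a₀ ∨ u i = u a₀ := by
    intro k
    induction k with
    | zero =>
      intro b hb
      by_cases h : a₀ = b
      · exact Or.inl (h ▸ rfl)
      · simp [pow_zero, Matrix.one_apply, h] at hb
    | succ k ih =>
      intro b hb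
      rw [pow_succ, Matrix.mul_apply] at hb
      have : (0:ℝ) = ∑ c : Fin n, 0 := by simp
      obtain ⟨c, -, hc⟩ := Finset.exists_lt_of_sum_lt (by rw [← this]; exact hb :
        ∑ c : Fin n, (0:ℝ) < ∑ c, (P ^ k) a₀ c * P c b)
      have hc1 : 0 < (P ^ k) a₀ c := by
        rcases (hpow k a₀ c).lt_or_eq with h | h
        · exact h
        · exfalso; rw [← h, zero_mul] at hc; exact lt_irrefl 0 hc
      have hc2 : 0 < P c b := by
        rcases (hP0 c b).lt_or_eq with h | h
        · exact h
        · exfalso; rw [← h, mul_zero] at hc; exact lt_irrefl 0 hc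
      rcases ih c hc1 with h | h
      · by_cases hci : c = i
        · exact Or.inr (hci ▸ h)
        · -- propagate max through c
          have h1 : u c ≤ ∑ l, P c l * u l := hh c hci
          have h2 : ∑ l, P c l * u l ≤ ∑ l, P c l * u a₀ :=
            Finset.sum_le_sum fun l _ =>
              mul_le_mul_of_nonneg_left (ha₀ l (Finset.mem_univ l)) (hP0 c l)
          have h3 : ∑ l, P c l * u a₀ = u a₀ := by
            rw [← Finset.sum_mul, hProw c, one_mul]
          have h4 : ∑ l, P c l * u l = u a₀ := le_antisymm (h3 ▸ h2) (h ▸ h1)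
          have h5 : ∑ l, P c l * (u a₀ - u l) = 0 := by
            simp only [mul_sub, Finset.sum_sub_distrib, h4, h3, sub_self]
          have h6 := (Finset.sum_eq_zero_iff_of_nonneg (fun l _ =>
            mul_nonneg (hP0 c l) (sub_nonneg.2 (ha₀ l (Finset.mem_univ l))))).1 h5
          have h7 := h6 b (Finset.mem_univ b)
          rcases mul_eq_zero.1 h7 with h8 | h8
          · exact absurd h8 (ne_of_gt hc2)
          · exact Or.inl (by linarith [sub_eq_zero.1 h8])
      · exact Or.inr h
  obtain ⟨m, -, hm⟩ := hPirr a₀ i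
  have hui : u i = u a₀ := by rcases key m i hm with h | h <;> exact h
  intro a
  rw [hui]
  exact ha₀ a (Finset.mem_univ a)

set_option maxHeartbeats 2000000 in
/-- The resistance distance `Ω(i,j) = L†_{i,i} + L†_{j,j} − L†_{i,j} − L†_{j,i}`
is a metric: nonnegativity (zero exactly on the diagonal), symmetry, and the triangle
inequality. -/
theorem directed_resistance_distance_is_metric
    {n : ℕ} (hn : 2 ≤ n)
    (P : Matrix (Fin n) (Fin n) ℝ)
    (hP0 : ∀ i j, 0 ≤ P i j)
    (hProw : ∀ i, ∑ j, P i j = 1)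
    (hPirr : ∀ i j, ∃ m : ℕ, 1 ≤ m ∧ 0 < (P ^ m) i j)
    (pv : Fin n → ℝ) (hpv0 : ∀ i, 0 < pv i) (hpvsum : ∑ i, pv i = 1)
    (hstat : pv ᵥ* P = pv)
    (d : ℝ) (hd : 0 < d)
    (L : Matrix (Fin n) (Fin n) ℝ)
    (hL : L = d • (Matrix.diagonal pv * (1 - P)))
    (M : Matrix (Fin n) (Fin n) ℝ)
    (hM1 : L * M * L = L) (hM2 : M * L * M = M)
    (hM3 : (L * M)ᵀ = L * M) (hM4 : (M * L)ᵀ = M * L)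
    (Ω : Fin n → Fin n → ℝ)
    (hΩ : ∀ i j, Ω i j = M i i + M j j - M i j - M j i) :
    (∀ i j, 0 ≤ Ω i j ∧ (Ω i j = 0 ↔ i = j)) ∧
    (∀ i j, Ω i j = Ω j i) ∧
    (∀ i j k, Ω i j ≤ Ω i k + Ω k j) := by
  -- entrywise formula for L *ᵥ u
  have hLapp : ∀ (u : Fin n → ℝ) (a : Fin n),
      (L *ᵥ u) a = d * pv a * (u a - ∑ l, P a l * u l) := by
    intro u a
    subst hL
    simp only [Matrix.mulVec, dotProduct, Matrix.smul_apply, Matrix.mul_apply,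
      Matrix.diagonal_apply, Matrix.sub_apply, Matrix.one_apply, smul_eq_mul]
    simp only [ite_mul, zero_mul, Finset.sum_ite_eq, Finset.mem_univ, if_true]
    have step : ∀ x, d * (pv a * ((if a = x then (1:ℝ) else 0) - P a x)) * u x
        = (if a = x then d * pv a * u x else 0) - d * pv a * (P a x * u x) := by
      intro x
      by_cases h : a = x <;> simp [h] <;> ring
    rw [Finset.sum_congr rfl fun x _ => step x, Finset.sum_sub_distrib,
      Finset.sum_ite_eq, ← Finset.mul_sum]
    simp [mul_sub]
  -- column sums of L are zero (uses stationarity)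
  have hcol : ∀ u : Fin n → ℝ, ∑ a, (L *ᵥ u) a = 0 := by
    intro u
    have hs : ∀ l, ∑ a, pv a * P a l = pv l := by
      intro l
      have := congrFun hstat l
      simpa [Matrix.vecMul, dotProduct] using this
    calc ∑ a, (L *ᵥ u) a
        = ∑ a, (d * (pv a * u a) - d * ∑ l, pv a * (P a l * u l)) := by
          refine Finset.sum_congr rfl fun a _ => ?_
          rw [hLapp, mul_sub, Finset.mul_sum, Finset.mul_sum]
          congr 1
          · ring
          · exact Finset.sum_congr rfl fun l _ => by ring
      _ = d * (∑ a, pv a * u a) - d * ∑ a, ∑ l, pv a * (P a l * u l) := by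
          rw [Finset.sum_sub_distrib, Finset.mul_sum, Finset.mul_sum]
      _ = 0 := by
          rw [Finset.sum_comm]
          have : ∀ l, ∑ a, pv a * (P a l * u l) = pv l * u l := by
            intro l
            have e : ∑ a, pv a * (P a l * u l) = (∑ a, pv a * P a l) * u l := by
              rw [Finset.sum_mul]
              exact Finset.sum_congr rfl fun a _ => (mul_assoc _ _ _).symm
            rw [e, hs]
          rw [Finset.sum_congr rfl fun l _ => this l]
          ring
  have hn0 : 0 < n := by omega
  -- kernel of L is the constants
  have hker : ∀ u : Fin n → ℝ, L *ᵥ u = 0 → ∃ c : ℝ, u = fun _ => c := by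
    intro u hu
    have harm : ∀ a, u a = ∑ l, P a l * u l := by
      intro a
      have := congrFun hu a
      rw [hLapp] at this
      have hne : d * pv a ≠ 0 := ne_of_gt (mul_pos hd (hpv0 a))
      have : u a - ∑ l, P a l * u l = 0 := by
        rcases mul_eq_zero.1 this with h | h
        · exact absurd h hne
        · exact h
      linarith
    have hmax : ∀ i a, u a ≤ u i := fun i =>
      resist_max_principle P hP0 hProw hPirr u i (fun a _ => le_of_eq (harm a))
    refine ⟨u ⟨0, hn0⟩, funext fun a => le_antisymm (hmax _ a) (hmax a _)⟩
  -- L surjects onto zero-sum vectors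
  set f := Matrix.mulVecLin L with hf
  have hone : ((fun _ => (1:ℝ)) : Fin n → ℝ) ≠ 0 := by
    intro h
    have := congrFun h ⟨0, hn0⟩
    simp at this
  have hkerf : LinearMap.ker f = Submodule.span ℝ {((fun _ => (1:ℝ)) : Fin n → ℝ)} := by
    ext u
    rw [LinearMap.mem_ker, Submodule.mem_span_singleton]
    constructor
    · intro hu
      obtain ⟨c, hc⟩ := hker u (by simpa [hf, Matrix.mulVecLin_apply] using hu)
      exact ⟨c, by funext a; simp [hc]⟩
    · rintro ⟨c, rfl⟩
      have h1 : L *ᵥ (fun _ => (1:ℝ)) = 0 := by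
        funext a
        rw [hLapp]
        have h2 : ∑ l, P a l * ((fun _ => (1:ℝ)) l) = 1 := by simpa using hProw a
        rw [h2]
        simp
      show f (c • fun _ => (1:ℝ)) = 0
      simp only [hf, Matrix.mulVecLin_apply]
      rw [Matrix.mulVec_smul, h1, smul_zero]
  have hfin : Module.finrank ℝ (Fin n → ℝ) = n := by simp
  have hk1 : Module.finrank ℝ (LinearMap.ker f) = 1 := by
    rw [hkerf]; exact finrank_span_singleton hone
  set g : (Fin n → ℝ) →ₗ[ℝ] ℝ := ∑ i, LinearMap.proj i with hg
  have hgapp : ∀ u : Fin n → ℝ, g u = ∑ i, u i := by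
    intro u; simp [hg, LinearMap.sum_apply]
  have hrg : LinearMap.range g = ⊤ := by
    rw [LinearMap.range_eq_top]
    intro r
    refine ⟨fun _ => r / n, ?_⟩
    rw [hgapp]
    rw [Finset.sum_const, Finset.card_univ, Fintype.card_fin, nsmul_eq_mul]
    field_simp
  have hkg : Module.finrank ℝ (LinearMap.ker g) = n - 1 := by
    have h2 := LinearMap.finrank_range_add_finrank_ker g
    rw [hrg, hfin, finrank_top, Module.finrank_self] at h2
    omega
  have hrf : LinearMap.range f = LinearMap.ker g := by
    have hle : LinearMap.range f ≤ LinearMap.ker g := by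
      rintro x ⟨u, rfl⟩
      rw [LinearMap.mem_ker, hgapp]
      simpa [hf, Matrix.mulVecLin_apply] using hcol u
    refine Submodule.eq_of_le_of_finrank_eq hle ?_
    have h2 := LinearMap.finrank_range_add_finrank_ker f
    rw [hk1, hfin] at h2
    omega
  have hsurj : ∀ x : Fin n → ℝ, (∑ a, x a = 0) → ∃ z, L *ᵥ z = x := by
    intro x hx
    have : x ∈ LinearMap.range f := by rw [hrf, LinearMap.mem_ker, hgapp]; exact hx
    obtain ⟨z, hz⟩ := this
    exact ⟨z, by simpa [hf, Matrix.mulVecLin_apply] using hz⟩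
  -- the key max/min principle for the potential u a = M a i - M a j
  have key : ∀ i j : Fin n, i ≠ j →
      (∀ a, M a i - M a j ≤ M i i - M i j) ∧ (∀ a, M j i - M j j ≤ M a i - M a j) ∧
      (M j i - M j j < M i i - M i j) := by
    intro i j hij
    set x : Fin n → ℝ := fun a => (if a = i then (1:ℝ) else 0) - (if a = j then 1 else 0)
      with hxdef
    have hxsum : ∑ a, x a = 0 := by
      simp [hxdef, Finset.sum_sub_distrib]
    obtain ⟨z, hz⟩ := hsurj x hxsum
    set u : Fin n → ℝ := M *ᵥ x with hudef
    have huL : L *ᵥ u = x := by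
      rw [hudef, ← hz, Matrix.mulVec_mulVec, Matrix.mulVec_mulVec, hM1, hz]
    have hua : ∀ a, u a = M a i - M a j := by
      intro a
      simp [hudef, hxdef, Matrix.mulVec, dotProduct, mul_sub, mul_ite,
        Finset.sum_sub_distrib]
    have hxi : x i = 1 := by simp [hxdef, hij]
    have hxj : x j = -1 := by simp [hxdef, Ne.symm hij]
    have hfact : ∀ a, d * pv a * (u a - ∑ l, P a l * u l) = x a := by
      intro a
      rw [← hLapp]
      exact congrFun huL a
    have hSi : ∑ l, P i l * u l < u i := by
      have := hfact i
      rw [hxi] at this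
      nlinarith [mul_pos hd (hpv0 i)]
    have hSj : u j < ∑ l, P j l * u l := by
      have := hfact j
      rw [hxj] at this
      nlinarith [mul_pos hd (hpv0 j)]
    have hSa : ∀ a, a ≠ i → a ≠ j → u a = ∑ l, P a l * u l := by
      intro a hai haj
      have := hfact a
      have hxa : x a = 0 := by simp [hxdef, hai, haj]
      rw [hxa, mul_eq_zero] at this
      rcases this with h | h
      · exact absurd h (ne_of_gt (mul_pos hd (hpv0 a)))
      · linarith
    have hmax : ∀ a, u a ≤ u i := by
      refine resist_max_principle P hP0 hProw hPirr u i ?_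
      intro a hai
      by_cases haj : a = j
      · subst haj; exact le_of_lt hSj
      · exact le_of_eq (hSa a hai haj)
    have hmin : ∀ a, u j ≤ u a := by
      have hneg : ∀ a, (-u) a ≤ (-u) j := by
        refine resist_max_principle P hP0 hProw hPirr (-u) j ?_
        intro a haj
        have hsum : ∑ l, P a l * (-u) l = -∑ l, P a l * u l := by
          simp [mul_neg]
        rw [hsum]
        by_cases hai : a = i
        · subst hai
          simp only [Pi.neg_apply]
          linarith
        · simp only [Pi.neg_apply]
          rw [hSa a hai haj]
      intro a
      have := hneg a
      simp only [Pi.neg_apply] at this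
      linarith
    have hstrict : u j < u i := by
      by_contra hc
      push_neg at hc
      have hconst : ∀ a, u a = u i := fun a => le_antisymm (hmax a) (le_trans hc (hmin a))
      have : ∑ l, P i l * u l = u i := by
        calc ∑ l, P i l * u l = ∑ l, P i l * u i := by
              exact Finset.sum_congr rfl fun l _ => by rw [hconst l]
          _ = u i := by rw [← Finset.sum_mul, hProw i, one_mul]
      linarith [hSi]
    refine ⟨fun a => ?_, fun a => ?_, ?_⟩
    · rw [← hua a, ← hua i]; exact hmax a
    · rw [← hua a, ← hua j]; exact hmin a
    · rw [← hua i, ← hua j]; exact hstrict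
  -- assemble the metric properties
  have part1 : ∀ i j, 0 ≤ Ω i j ∧ (Ω i j = 0 ↔ i = j) := by
    intro i j
    by_cases hij : i = j
    · subst hij
      constructor
      · rw [hΩ]; ring_nf; exact le_refl _
      · constructor <;> intro _ <;> [rfl; (rw [hΩ]; ring)]
    · obtain ⟨-, -, hstrict⟩ := key i j hij
      have hpos : 0 < Ω i j := by rw [hΩ]; linarith
      exact ⟨le_of_lt hpos, ⟨fun h => absurd h (ne_of_gt hpos), fun h => absurd h hij⟩⟩
  refine ⟨part1, fun i j => by rw [hΩ, hΩ]; ring, ?_⟩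
  intro i j k
  by_cases hij : i = j
  · subst hij
    have h0 : Ω i i = 0 := by rw [hΩ]; ring
    rw [h0]
    have := (part1 i k).1
    have := (part1 k i).1
    linarith
  by_cases hik : i = k
  · subst hik
    have h0 : Ω i i = 0 := by rw [hΩ]; ring
    rw [h0]; linarith
  by_cases hkj : k = j
  · subst hkj
    have h0 : Ω k k = 0 := by rw [hΩ]; ring
    rw [h0]; linarith
  obtain ⟨-, hlow, -⟩ := key i k hik
  obtain ⟨hup, -, -⟩ := key k j hkj
  have h1 := hlow j
  have h2 := hup i
  rw [hΩ i j, hΩ i k, hΩ k j]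
  linarith
end

section
/- For any two distinct indices i and j, the resistance distance satisfies Ω(i,j) = ((L_{\{i}})⁻¹)_{j,j} = ((L_{\{j}})⁻¹)_{i,i}, where the entries of the inverses of the principal submatrices are indexed by the original indices. -/
/-!
The kernel of `L` consists of the constant vectors (a fixed vector of an irreducible stochastic
matrix is constant, by the maximum principle), and the columns of `L` sum to zero because `π` is
stationary. Hence `L_{\{i}}` is invertible, and extending `L_{\{i}}⁻¹ e_j` by `x_i = 0` gives a
solution of `L x = e_j - e_i`: the `i`-th equation follows from the others since the columns sum
to zero. Because `L M L = L`, the vector `M (e_j - e_i)` solves the same system, so it differs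
from `x` by a constant, and comparing the `j`- and `i`-coordinates gives
`Ω(i,j) = x_j - x_i = (L_{\{i}}⁻¹)_{j,j}`.
-/

open Matrix Finset

variable {ι K : Type*}

lemma eq_of_sum_eq_of_forall_ne [Fintype ι] [DecidableEq ι] {M : Type*} [AddCommGroup M]
    {y z : ι → M} (i : ι) (hsum : ∑ k, y k = ∑ k, z k) (hne : ∀ k, k ≠ i → y k = z k) :
    y = z := by
  funext k
  by_cases hk : k = i
  · subst hk
    rw [← add_sum_erase _ _ (mem_univ k), ← add_sum_erase _ _ (mem_univ k),
      sum_congr rfl fun l hl => hne l (ne_of_mem_erase hl)] at hsum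
    exact add_right_cancel hsum
  · exact hne k hk

lemma exists_apply_eq_zero_and_restrict_eq [DecidableEq ι] [Zero K] (i : ι)
    (v : {k // k ≠ i} → K) : ∃ x : ι → K, x i = 0 ∧ (fun s : {k // k ≠ i} => x s) = v :=
  ⟨fun k => if h : k = i then 0 else v ⟨k, h⟩, by simp, funext fun s => by simp [s.2]⟩

namespace Matrix

lemma sum_mulVec_eq_zero [Fintype ι] [Semiring K] {L : Matrix ι ι K} (hcol : 1 ᵥ* L = 0)
    (x : ι → K) : ∑ k, (L *ᵥ x) k = 0 := by
  rw [← one_dotProduct, dotProduct_mulVec, hcol, zero_dotProduct]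

section Submatrix

variable [Fintype ι] [DecidableEq ι]

section Ring

variable [Ring K] {L : Matrix ι ι K}

lemma submatrix_mulVec_restrict_of_apply_eq_zero {i : ι} {x : ι → K} (hx : x i = 0) :
    (L.submatrix Subtype.val Subtype.val *ᵥ fun s : {k // k ≠ i} => x s) =
      fun s : {k // k ≠ i} => (L *ᵥ x) s := by
  funext s
  simp only [mulVec, dotProduct, submatrix_apply]
  rw [← Fintype.sum_subtype_add_sum_subtype (· ≠ i), left_eq_add]
  refine sum_eq_zero fun t _ => ?_
  rw [show (t : ι) = i from not_not.1 t.2, hx, mul_zero]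

lemma mulVec_eq_of_submatrix_mulVec_eq (hcol : 1 ᵥ* L = 0) {i : ι} {x b : ι → K}
    (hx : x i = 0) (hb : ∑ k, b k = 0)
    (h : (L.submatrix Subtype.val Subtype.val *ᵥ fun s : {k // k ≠ i} => x s) =
      fun s : {k // k ≠ i} => b s) :
    L *ᵥ x = b := by
  rw [submatrix_mulVec_restrict_of_apply_eq_zero hx] at h
  refine eq_of_sum_eq_of_forall_ne i (by rw [sum_mulVec_eq_zero hcol, hb]) fun k hk => ?_
  exact congrFun h ⟨k, hk⟩

end Ring

variable [Field K] {L : Matrix ι ι K}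

lemma isUnit_det_submatrix_ne (hcol : 1 ᵥ* L = 0)
    (hker : ∀ v, L *ᵥ v = 0 → ∀ a b, v a = v b) (i : ι) :
    IsUnit (L.submatrix (Subtype.val : {k // k ≠ i} → ι) Subtype.val).det := by
  rw [isUnit_iff_ne_zero]
  intro hdet
  obtain ⟨v, hv0, hv⟩ := exists_mulVec_eq_zero_iff.mpr hdet
  obtain ⟨x, hxi, rfl⟩ := exists_apply_eq_zero_and_restrict_eq i v
  have hLx : L *ᵥ x = 0 := mulVec_eq_of_submatrix_mulVec_eq hcol hxi (by simp) hv
  exact hv0 (funext fun s => by simp [hker x hLx s i, hxi])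

lemma add_sub_sub_eq_inv_submatrix_apply (hcol : 1 ᵥ* L = 0)
    (hker : ∀ v, L *ᵥ v = 0 → ∀ a b, v a = v b) {M : Matrix ι ι K} (hM : L * M * L = L)
    {i j : ι} (hij : i ≠ j) :
    M i i + M j j - M i j - M j i =
      (L.submatrix Subtype.val Subtype.val : Matrix {k // k ≠ i} {k // k ≠ i} K)⁻¹
        ⟨j, hij.symm⟩ ⟨j, hij.symm⟩ := by
  set Li := L.submatrix (Subtype.val : {k // k ≠ i} → ι) Subtype.val
  set b : ι → K := Pi.single j 1 - Pi.single i 1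
  obtain ⟨x, hxi, hxv⟩ :=
    exists_apply_eq_zero_and_restrict_eq i (Li⁻¹ *ᵥ Pi.single (⟨j, hij.symm⟩ : {k // k ≠ i}) 1)
  have hLx : L *ᵥ x = b := by
    refine mulVec_eq_of_submatrix_mulVec_eq hcol hxi (by simp [b]) ?_
    rw [hxv, mulVec_mulVec, mul_nonsing_inv _ (isUnit_det_submatrix_ne hcol hker i),
      one_mulVec]
    funext s
    simp [b, Pi.single_apply, Subtype.ext_iff, s.2]
  have hker_Mb : L *ᵥ (M *ᵥ b - x) = 0 := by
    rw [mulVec_sub, ← hLx, mulVec_mulVec, mulVec_mulVec, hM, sub_self]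
  have hxj : x j = Li⁻¹ ⟨j, hij.symm⟩ ⟨j, hij.symm⟩ := by
    simpa [mulVec_single_one] using congrFun hxv ⟨j, hij.symm⟩
  have := hker _ hker_Mb j i
  simp only [b, mulVec_sub, mulVec_single_one, Pi.sub_apply, col_apply, hxi, hxj, sub_zero]
    at this
  linear_combination this

end Submatrix

lemma pow_mulVec_eq_self [Fintype ι] [DecidableEq ι] [Semiring K] {P : Matrix ι ι K}
    {v : ι → K} (hv : P *ᵥ v = v) (m : ℕ) : P ^ m *ᵥ v = v := by
  induction m with
  | zero => exact one_mulVec v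
  | succ m ih => rw [pow_succ, ← mulVec_mulVec, hv, ih]

section Stochastic

variable [Fintype ι] [DecidableEq ι] [CommRing K] [LinearOrder K] [IsStrictOrderedRing K]

lemma apply_eq_of_mulVec_apply_eq_of_forall_le {M : Matrix ι ι K} (hM : M ∈ rowStochastic K ι)
    {v : ι → K} {k l : ι} (hmax : ∀ r, v r ≤ v k) (hfix : (M *ᵥ v) k = v k)
    (hpos : 0 < M k l) : v l = v k := by
  have hsum : ∑ r, M k r * (v k - v r) = 0 := by
    simp only [mul_sub, sum_sub_distrib, ← sum_mul, sum_row_of_mem_rowStochastic hM, one_mul]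
    exact sub_eq_zero.2 hfix.symm
  have hterm := (sum_eq_zero_iff_of_nonneg fun r _ =>
    mul_nonneg (nonneg_of_mem_rowStochastic hM) (sub_nonneg.2 (hmax r))).1 hsum l (mem_univ l)
  exact (sub_eq_zero.1 ((mul_eq_zero.1 hterm).resolve_left hpos.ne')).symm

lemma apply_eq_of_mulVec_eq_self {P : Matrix ι ι K} (hP : P ∈ rowStochastic K ι)
    (hirr : ∀ i j, ∃ m : ℕ, 0 < (P ^ m) i j) {v : ι → K} (hv : P *ᵥ v = v) (a b : ι) :
    v a = v b := by
  obtain ⟨k, -, hk⟩ := exists_max_image univ v ⟨a, mem_univ a⟩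
  have hconst : ∀ l, v l = v k := fun l => by
    obtain ⟨m, hm⟩ := hirr k l
    exact apply_eq_of_mulVec_apply_eq_of_forall_le (pow_mem hP m) (fun r => hk r (mem_univ r))
      (congrFun (pow_mulVec_eq_self hv m) k) hm
  rw [hconst a, hconst b]

end Stochastic

section Laplacian

variable [Fintype ι] [DecidableEq ι] [CommRing K]

def directedLaplacian (d : K) (π : ι → K) (P : Matrix ι ι K) : Matrix ι ι K :=
  d • (diagonal π * (1 - P))

lemma one_vecMul_directedLaplacian {π : ι → K} {P : Matrix ι ι K} (hπ : π ᵥ* P = π) (d : K) :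
    1 ᵥ* directedLaplacian d π P = 0 := by
  have hdiag : 1 ᵥ* diagonal π = π := funext fun k => by simp [vecMul_diagonal]
  rw [directedLaplacian, vecMul_smul, ← vecMul_vecMul, hdiag, vecMul_sub, vecMul_one, hπ,
    sub_self, smul_zero]

lemma mulVec_eq_self_of_directedLaplacian_mulVec_eq_zero [NoZeroDivisors K] {d : K} {π : ι → K}
    {P : Matrix ι ι K} (hd : d ≠ 0) (hπ : ∀ k, π k ≠ 0) {v : ι → K}
    (hv : directedLaplacian d π P *ᵥ v = 0) : P *ᵥ v = v := by
  funext k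
  have hk := congrFun hv k
  simp only [directedLaplacian, smul_mulVec, ← mulVec_mulVec, sub_mulVec, one_mulVec,
    mulVec_diagonal, Pi.smul_apply, Pi.sub_apply, Pi.zero_apply, smul_eq_mul, mul_eq_zero,
    hd, hπ k, false_or, sub_eq_zero] at hk
  exact hk.symm

end Laplacian

end Matrix

theorem directed_resistance_distance_via_submatrix_general
    {n : ℕ}
    (P : Matrix (Fin n) (Fin n) ℝ)
    (hP0 : ∀ i j, 0 ≤ P i j)
    (hProw : ∀ i, ∑ j, P i j = 1)
    (hPirr : ∀ i j, ∃ m : ℕ, 1 ≤ m ∧ 0 < (P ^ m) i j)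
    (pv : Fin n → ℝ) (hpv0 : ∀ i, 0 < pv i)
    (hstat : pv ᵥ* P = pv)
    (d : ℝ) (hd : 0 < d)
    (L : Matrix (Fin n) (Fin n) ℝ)
    (hL : L = d • (Matrix.diagonal pv * (1 - P)))
    (M : Matrix (Fin n) (Fin n) ℝ)
    (hM1 : L * M * L = L)
    (Ω : Fin n → Fin n → ℝ)
    (hΩ : ∀ i j, Ω i j = M i i + M j j - M i j - M j i)
    (i j : Fin n) (hij : i ≠ j)
    (Li : Matrix {x : Fin n // x ≠ i} {x : Fin n // x ≠ i} ℝ)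
    (hLi : Li = L.submatrix Subtype.val Subtype.val)
    (Lj : Matrix {x : Fin n // x ≠ j} {x : Fin n // x ≠ j} ℝ)
    (hLj : Lj = L.submatrix Subtype.val Subtype.val) :
    Ω i j = Li⁻¹ ⟨j, hij.symm⟩ ⟨j, hij.symm⟩ ∧
    Ω i j = Lj⁻¹ ⟨i, hij⟩ ⟨i, hij⟩ := by
  have hP : P ∈ rowStochastic ℝ (Fin n) := mem_rowStochastic_iff_sum.2 ⟨hP0, hProw⟩
  replace hL : L = directedLaplacian d pv P := hL
  have hcol : 1 ᵥ* L = 0 := hL ▸ one_vecMul_directedLaplacian hstat d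
  have hker : ∀ v, L *ᵥ v = 0 → ∀ a b, v a = v b := fun v hv =>
    apply_eq_of_mulVec_eq_self hP (fun a b => (hPirr a b).imp fun _ => And.right)
      (mulVec_eq_self_of_directedLaplacian_mulVec_eq_zero hd.ne' (fun k => (hpv0 k).ne')
        (hL ▸ hv))
  subst hLi hLj
  rw [hΩ]
  refine ⟨add_sub_sub_eq_inv_submatrix_apply hcol hker hM1 hij, ?_⟩
  rw [← add_sub_sub_eq_inv_submatrix_apply hcol hker hM1 hij.symm]
  ring

/-- For distinct indices `i ≠ j`,
`Ω(i,j) = ((L_{\{i}})⁻¹)_{j,j} = ((L_{\{j}})⁻¹)_{i,i}`. -/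
theorem directed_resistance_distance_via_submatrix
    {n : ℕ} (hn : 2 ≤ n)
    (P : Matrix (Fin n) (Fin n) ℝ)
    (hP0 : ∀ i j, 0 ≤ P i j)
    (hProw : ∀ i, ∑ j, P i j = 1)
    (hPirr : ∀ i j, ∃ m : ℕ, 1 ≤ m ∧ 0 < (P ^ m) i j)
    (pv : Fin n → ℝ) (hpv0 : ∀ i, 0 < pv i) (hpvsum : ∑ i, pv i = 1)
    (hstat : pv ᵥ* P = pv)
    (d : ℝ) (hd : 0 < d)
    (L : Matrix (Fin n) (Fin n) ℝ)
    (hL : L = d • (Matrix.diagonal pv * (1 - P)))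
    (M : Matrix (Fin n) (Fin n) ℝ)
    (hM1 : L * M * L = L) (hM2 : M * L * M = M)
    (hM3 : (L * M)ᵀ = L * M) (hM4 : (M * L)ᵀ = M * L)
    (Ω : Fin n → Fin n → ℝ)
    (hΩ : ∀ i j, Ω i j = M i i + M j j - M i j - M j i)
    (i j : Fin n) (hij : i ≠ j)
    (Li : Matrix {x : Fin n // x ≠ i} {x : Fin n // x ≠ i} ℝ)
    (hLi : Li = L.submatrix Subtype.val Subtype.val)
    (Lj : Matrix {x : Fin n // x ≠ j} {x : Fin n // x ≠ j} ℝ)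
    (hLj : Lj = L.submatrix Subtype.val Subtype.val) :
    Ω i j = Li⁻¹ ⟨j, hij.symm⟩ ⟨j, hij.symm⟩ ∧
    Ω i j = Lj⁻¹ ⟨i, hij⟩ ⟨i, hij⟩ :=
  directed_resistance_distance_via_submatrix_general P hP0 hProw hPirr pv hpv0 hstat d hd L hL M hM1
    Ω hΩ i j hij Li hLi Lj hLj
end

section
/- For every index i, the resistance distance of vertex i satisfies Ω(i) := Σ_{j=1}^{n} Ω(i,j) = n·L†_{i,i} + tr(L†). -/
open Matrix BigOperators

/-- For every index `i`, `Ω(i) = Σ_j Ω(i,j) = n·L†_{i,i} + tr(L†)`. -/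
theorem directed_resistance_distance_of_vertex
    {n : ℕ} (hn : 2 ≤ n)
    (P : Matrix (Fin n) (Fin n) ℝ)
    (hP0 : ∀ i j, 0 ≤ P i j)
    (hProw : ∀ i, ∑ j, P i j = 1)
    (hPirr : ∀ i j, ∃ m : ℕ, 1 ≤ m ∧ 0 < (P ^ m) i j)
    (pv : Fin n → ℝ) (hpv0 : ∀ i, 0 < pv i) (hpvsum : ∑ i, pv i = 1)
    (hstat : pv ᵥ* P = pv)
    (d : ℝ) (hd : 0 < d)
    (L : Matrix (Fin n) (Fin n) ℝ)
    (hL : L = d • (Matrix.diagonal pv * (1 - P)))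
    (M : Matrix (Fin n) (Fin n) ℝ)
    (hM1 : L * M * L = L) (hM2 : M * L * M = M)
    (hM3 : (L * M)ᵀ = L * M) (hM4 : (M * L)ᵀ = M * L)
    (Ω : Fin n → Fin n → ℝ)
    (hΩ : ∀ i j, Ω i j = M i i + M j j - M i j - M j i)
    (i : Fin n) :
    ∑ j, Ω i j = (n : ℝ) * M i i + M.trace := by
  set e : Fin n → ℝ := fun _ => 1 with he
  have hLe : L *ᵥ e = 0 := by
    funext k
    simp only [hL, Matrix.mulVec, dotProduct, Pi.zero_apply, he,
      Matrix.smul_apply, Matrix.diagonal_mul, Matrix.sub_apply, smul_eq_mul, mul_one]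
    simp only [mul_sub, Finset.sum_sub_distrib, ← Finset.mul_sum, hProw, mul_one]
    simp [Matrix.one_apply]
  have heL : e ᵥ* L = 0 := by
    funext j
    simp only [hL, Matrix.vecMul, dotProduct, Pi.zero_apply, he,
      Matrix.smul_apply, Matrix.diagonal_mul, Matrix.sub_apply, smul_eq_mul, one_mul]
    have hs : ∑ k, pv k * P k j = pv j := by
      have := congrFun hstat j
      simpa [Matrix.vecMul, dotProduct] using this
    have h1 : ∑ k, pv k * (1 : Matrix (Fin n) (Fin n) ℝ) k j = pv j := by
      simp [Matrix.one_apply]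
    simp only [mul_sub, Finset.sum_sub_distrib, ← Finset.mul_sum]
    rw [h1, hs]
    ring
  have hMe : M *ᵥ e = 0 := by
    have hLMe : (L * M) *ᵥ e = 0 := by
      rw [← hM3, Matrix.mulVec_transpose, ← Matrix.vecMul_vecMul, heL, Matrix.zero_vecMul]
    calc M *ᵥ e = (M * (L * M)) *ᵥ e := by rw [← mul_assoc, hM2]
    _ = M *ᵥ ((L * M) *ᵥ e) := by rw [Matrix.mulVec_mulVec]
    _ = 0 := by rw [hLMe, Matrix.mulVec_zero]
  have heM : e ᵥ* M = 0 := by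
    have hMLe : e ᵥ* (M * L) = 0 := by
      rw [← hM4, Matrix.vecMul_transpose, ← Matrix.mulVec_mulVec, hLe, Matrix.mulVec_zero]
    calc e ᵥ* M = e ᵥ* ((M * L) * M) := by rw [hM2]
    _ = (e ᵥ* (M * L)) ᵥ* M := by rw [Matrix.vecMul_vecMul]
    _ = 0 := by rw [hMLe, Matrix.zero_vecMul]
  have hrow : ∑ j, M i j = 0 := by
    have := congrFun hMe i
    simpa [Matrix.mulVec, dotProduct, he] using this
  have hcol : ∑ j, M j i = 0 := by
    have := congrFun heM i
    simpa [Matrix.vecMul, dotProduct, he] using this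
  simp only [hΩ]
  rw [Finset.sum_sub_distrib, Finset.sum_sub_distrib, Finset.sum_add_distrib, hrow, hcol,
    Finset.sum_const, Matrix.trace]
  simp [Matrix.diag, mul_comm, nsmul_eq_mul]
end

section
/- For every index i, the resistance distance of vertex i satisfies Ω(i) := Σ_{j=1}^{n} Ω(i,j) = tr((L_{\{i}})⁻¹), the trace of the inverse of the principal submatrix of L obtained by deleting the i-th row and column. -/
open Matrix BigOperators

/-- For every index `i`, `Ω(i) = Σ_j Ω(i,j) = tr((L_{\{i}})⁻¹)`. -/
theorem directed_resistance_distance_of_vertex_trace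
    {n : ℕ} (hn : 2 ≤ n)
    (P : Matrix (Fin n) (Fin n) ℝ)
    (hP0 : ∀ i j, 0 ≤ P i j)
    (hProw : ∀ i, ∑ j, P i j = 1)
    (hPirr : ∀ i j, ∃ m : ℕ, 1 ≤ m ∧ 0 < (P ^ m) i j)
    (pv : Fin n → ℝ) (hpv0 : ∀ i, 0 < pv i) (hpvsum : ∑ i, pv i = 1)
    (hstat : pv ᵥ* P = pv)
    (d : ℝ) (hd : 0 < d)
    (L : Matrix (Fin n) (Fin n) ℝ)
    (hL : L = d • (Matrix.diagonal pv * (1 - P)))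
    (M : Matrix (Fin n) (Fin n) ℝ)
    (hM1 : L * M * L = L) (hM2 : M * L * M = M)
    (hM3 : (L * M)ᵀ = L * M) (hM4 : (M * L)ᵀ = M * L)
    (Ω : Fin n → Fin n → ℝ)
    (hΩ : ∀ i j, Ω i j = M i i + M j j - M i j - M j i)
    (i : Fin n)
    (Li : Matrix {x : Fin n // x ≠ i} {x : Fin n // x ≠ i} ℝ)
    (hLi : Li = L.submatrix Subtype.val Subtype.val) :
    ∑ j, Ω i j = (Li⁻¹).trace := by
  have hnR : (n : ℝ) ≠ 0 := by
    have : (0:ℕ) < n := by omega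
    exact_mod_cast this.ne'
  -- entrywise formula for L
  have hLe : ∀ j k, L j k = d * (pv j * ((if j = k then 1 else 0) - P j k)) := by
    intro j k
    simp [hL, Matrix.smul_apply, Matrix.sub_apply, Matrix.one_apply]
  -- row sums of L are zero
  have hLrow : ∀ j, ∑ k, L j k = 0 := by
    intro j
    calc ∑ k, L j k
        = ∑ k, (d * pv j * (if j = k then 1 else 0) - d * pv j * P j k) := by
          apply Finset.sum_congr rfl; intro k _; rw [hLe]; ring
      _ = d * pv j * (∑ k, (if j = k then (1:ℝ) else 0)) - d * pv j * ∑ k, P j k := by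
          rw [Finset.sum_sub_distrib, Finset.mul_sum, Finset.mul_sum]
      _ = 0 := by simp [hProw j]
  -- column sums of L are zero
  have hLcol : ∀ k, ∑ j, L j k = 0 := by
    intro k
    have hs : ∑ j, pv j * P j k = pv k := by
      have := congrFun hstat k
      simpa [Matrix.vecMul, dotProduct] using this
    simp only [hLe]
    have : ∑ j, d * (pv j * ((if j = k then 1 else 0) - P j k))
        = d * ((∑ j, pv j * (if j = k then 1 else 0)) - ∑ j, pv j * P j k) := by
      rw [← Finset.sum_sub_distrib, ← Finset.mul_sum]
      congr 1; apply Finset.sum_congr rfl; intro j _; ring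
    rw [this, hs]
    simp
  -- powers of P have nonneg entries
  have hpow0 : ∀ (m : ℕ) j k, 0 ≤ (P ^ m) j k := by
    intro m
    induction m with
    | zero =>
      intro j k
      by_cases h : j = k <;> simp [Matrix.one_apply, h]
    | succ m ih =>
      intro j k
      rw [pow_succ, Matrix.mul_apply]
      exact Finset.sum_nonneg fun l _ => mul_nonneg (ih j l) (hP0 l k)
  -- powers of P are row-stochastic
  have hpowrow : ∀ (m : ℕ) j, ∑ k, (P ^ m) j k = 1 := by
    intro m
    induction m with
    | zero => intro j; simp [Matrix.one_apply]
    | succ m ih =>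
      intro j
      rw [pow_succ]
      calc ∑ k, (P ^ m * P) j k = ∑ k, ∑ l, (P ^ m) j l * P l k := by
            simp [Matrix.mul_apply]
        _ = ∑ l, (P ^ m) j l * ∑ k, P l k := by
            rw [Finset.sum_comm]; simp [Finset.mul_sum]
        _ = 1 := by simp [hProw, ih j]
  -- fixed vectors of P are constant
  have hfix : ∀ x : Fin n → ℝ, (∀ j, x j = ∑ k, P j k * x k) → ∀ j k, x j = x k := by
    intro x hx
    have hxm : ∀ (m : ℕ) j, x j = ∑ k, (P ^ m) j k * x k := by
      intro m
      induction m with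
      | zero => intro j; simp [Matrix.one_apply]
      | succ m ih =>
        intro j
        rw [pow_succ']
        have h1 : ∑ k, (P * P ^ m) j k * x k
            = ∑ l, P j l * (∑ k, (P ^ m) l k * x k) := by
          simp only [Matrix.mul_apply, Finset.sum_mul, Finset.mul_sum]
          rw [Finset.sum_comm]
          apply Finset.sum_congr rfl; intro l _
          apply Finset.sum_congr rfl; intro k _; ring
        rw [h1]
        calc x j = ∑ l, P j l * x l := hx j
          _ = ∑ l, P j l * (∑ k, (P ^ m) l k * x k) := by
              apply Finset.sum_congr rfl; intro l _; rw [← ih l]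
    obtain ⟨i0, -, hi0⟩ := Finset.exists_max_image Finset.univ x
      ⟨⟨0, by omega⟩, Finset.mem_univ _⟩
    have hall : ∀ j, x j = x i0 := by
      intro j
      obtain ⟨m, -, hm⟩ := hPirr i0 j
      have h0 : ∑ k, (P ^ m) i0 k * (x i0 - x k) = 0 := by
        have h1 : ∑ k, (P ^ m) i0 k * (x i0 - x k)
            = (∑ k, (P ^ m) i0 k) * x i0 - ∑ k, (P ^ m) i0 k * x k := by
          rw [Finset.sum_mul, ← Finset.sum_sub_distrib]
          apply Finset.sum_congr rfl; intro k _; ring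
        rw [h1, hpowrow m i0, one_mul, ← hxm m i0, sub_self]
      have hnn : ∀ k ∈ Finset.univ, (0:ℝ) ≤ (P ^ m) i0 k * (x i0 - x k) :=
        fun k _ => mul_nonneg (hpow0 m i0 k) (by linarith [hi0 k (Finset.mem_univ k)])
      have := (Finset.sum_eq_zero_iff_of_nonneg hnn).mp h0 j (Finset.mem_univ j)
      rcases mul_eq_zero.mp this with h | h
      · exact absurd h hm.ne'
      · linarith
    intro j k; rw [hall j, hall k]
  -- kernel of L consists of constant vectors
  have hker : ∀ x : Fin n → ℝ, (∀ j, ∑ k, L j k * x k = 0) → ∀ j k, x j = x k := by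
    intro x hx
    apply hfix
    intro j
    have h1 : ∑ k, L j k * x k
        = d * (pv j * (x j - ∑ k, P j k * x k)) := by
      simp only [hLe]
      have : ∀ k, d * (pv j * ((if j = k then 1 else 0) - P j k)) * x k
          = d * pv j * ((if j = k then x k else 0) - P j k * x k) := by
        intro k; by_cases h : j = k <;> simp [h] <;> ring
      simp only [this]
      rw [← Finset.mul_sum, Finset.sum_sub_distrib]
      simp [Finset.sum_ite_eq, mul_sub, mul_assoc]
    rw [hx j] at h1
    have h2 : x j - ∑ k, P j k * x k = 0 := by
      rcases mul_eq_zero.mp h1.symm with h | h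
      · exact absurd h hd.ne'
      rcases mul_eq_zero.mp h with h | h
      · exact absurd h (hpv0 j).ne'
      · exact h
    linarith
  -- column sums of M*L and row sums
  have hMLrow : ∀ j, ∑ k, (M * L) j k = 0 := by
    intro j
    calc ∑ k, (M * L) j k = ∑ k, ∑ l, M j l * L l k := by simp [Matrix.mul_apply]
      _ = ∑ l, M j l * ∑ k, L l k := by rw [Finset.sum_comm]; simp [Finset.mul_sum]
      _ = 0 := by simp [hLrow]
  have hMLsym : ∀ j k, (M * L) j k = (M * L) k j := by
    intro j k
    have := congrFun (congrFun hM4 j) k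
    simpa [Matrix.transpose_apply] using this.symm
  have hMLcol : ∀ k, ∑ j, (M * L) j k = 0 := by
    intro k
    calc ∑ j, (M * L) j k = ∑ j, (M * L) k j := by
          apply Finset.sum_congr rfl; intro j _; exact hMLsym j k
      _ = 0 := hMLrow k
  have hLMsym : ∀ j k, (L * M) j k = (L * M) k j := by
    intro j k
    have := congrFun (congrFun hM3 j) k
    simpa [Matrix.transpose_apply] using this.symm
  have hLMrow : ∀ j, ∑ k, (L * M) j k = 0 := by
    intro j
    calc ∑ k, (L * M) j k = ∑ k, (L * M) k j := by
          apply Finset.sum_congr rfl; intro k _; exact hLMsym j k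
      _ = ∑ k, ∑ l, L k l * M l j := by simp [Matrix.mul_apply]
      _ = ∑ l, (∑ k, L k l) * M l j := by
          rw [Finset.sum_comm]; simp [Finset.sum_mul]
      _ = 0 := by simp [hLcol]
  -- row sums of M are zero
  have hMrow : ∀ j, ∑ k, M j k = 0 := by
    intro j
    have hM2' : M = M * (L * M) := by rw [← Matrix.mul_assoc, hM2]
    calc ∑ k, M j k = ∑ k, (M * (L * M)) j k := by rw [← hM2']
      _ = ∑ k, ∑ l, M j l * (L * M) l k := by simp [Matrix.mul_apply]
      _ = ∑ l, M j l * ∑ k, (L * M) l k := by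
          rw [Finset.sum_comm]; simp [Finset.mul_sum]
      _ = 0 := by simp [hLMrow]
  -- column sums of M are zero
  have hMcol : ∀ k, ∑ j, M j k = 0 := by
    intro k
    have hM2' : M = (M * L) * M := by rw [hM2]
    calc ∑ j, M j k = ∑ j, ((M * L) * M) j k := by rw [← hM2']
      _ = ∑ j, ∑ l, (M * L) j l * M l k := by simp [Matrix.mul_apply]
      _ = ∑ l, (∑ j, (M * L) j l) * M l k := by
          rw [Finset.sum_comm]; simp [Finset.sum_mul]
      _ = 0 := by simp [hMLcol]
  -- the key identity: (M*L) j k = δ_{jk} - 1/n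
  have hML : ∀ j k, (M * L) j k = (if j = k then 1 else 0) - 1 / n := by
    intro j k
    set v : Fin n → ℝ := fun j => (M * L) j k - (if j = k then 1 else 0) with hv
    have hvker : ∀ a, ∑ l, L a l * v l = 0 := by
      intro a
      have e1 : ∑ l, L a l * ((M * L) l k) = (L * (M * L)) a k := by
        simp [Matrix.mul_apply]
      have e2 : ∑ l, L a l * (if l = k then (1:ℝ) else 0) = L a k := by
        simp
      have h1 : ∑ l, L a l * v l
          = (L * (M * L)) a k - L a k := by
        calc ∑ l, L a l * v l
            = ∑ l, (L a l * (M * L) l k - L a l * (if l = k then (1:ℝ) else 0)) := by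
              apply Finset.sum_congr rfl; intro l _; simp only [hv]; ring
          _ = (L * (M * L)) a k - L a k := by
              rw [Finset.sum_sub_distrib, e1, e2]
      rw [h1, ← Matrix.mul_assoc, hM1, sub_self]
    have hvconst := hker v hvker
    have hvsum : ∑ a, v a = -1 := by
      simp only [hv]
      rw [Finset.sum_sub_distrib, hMLcol k]
      simp
    have hcard : ∑ a, v a = n * v j := by
      calc ∑ a, v a = ∑ _a : Fin n, v j := by
            apply Finset.sum_congr rfl; intro a _; exact hvconst a j
        _ = n * v j := by simp [Finset.sum_const, mul_comm]
      
    have hvj : v j = -1 / n := by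
      rw [hvsum] at hcard
      rw [eq_div_iff hnR]
      linarith
    simp only [hv] at hvj
    have : (M * L) j k = (if j = k then 1 else 0) + (-1 / n) := by linarith
    rw [this]; ring
  -- sum over the subtype
  have hsub : ∀ f : Fin n → ℝ,
      ∑ l : {x : Fin n // x ≠ i}, f l.val = (∑ l, f l) - f i := by
    intro f
    have h1 : ∑ l ∈ Finset.univ.erase i, f l
        = ∑ l : {x : Fin n // x ≠ i}, f l.val := by
      apply Finset.sum_subtype
      intro x; simp [Finset.mem_erase]
    rw [← h1, Finset.sum_erase_eq_sub (Finset.mem_univ i)]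
  -- the candidate inverse
  set X : Matrix {x : Fin n // x ≠ i} {x : Fin n // x ≠ i} ℝ :=
    Matrix.of (fun j k => M j.val k.val - M j.val i - M i k.val + M i i) with hX
  have hXLi : X * Li = 1 := by
    ext j k
    rw [Matrix.mul_apply]
    have hterm : ∀ l : {x : Fin n // x ≠ i}, X j l * Li l k
        = (M j.val l.val - M j.val i - M i l.val + M i i) * L l.val k.val := by
      intro l; simp [hX, hLi, Matrix.submatrix_apply]
    simp only [hterm]
    rw [hsub (fun l => (M j.val l - M j.val i - M i l + M i i) * L l k.val)]
    have hzero : (M j.val i - M j.val i - M i i + M i i) * L i k.val = 0 := by ring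
    rw [hzero, sub_zero]
    have hexp : ∑ l, (M j.val l - M j.val i - M i l + M i i) * L l k.val
        = (∑ l, M j.val l * L l k.val) - M j.val i * (∑ l, L l k.val)
          - (∑ l, M i l * L l k.val) + M i i * (∑ l, L l k.val) := by
      simp only [sub_mul, add_mul, Finset.sum_sub_distrib, Finset.sum_add_distrib,
        Finset.mul_sum]
    rw [hexp, hLcol k.val]
    have h1 : ∑ l, M j.val l * L l k.val = (M * L) j.val k.val := by
      simp [Matrix.mul_apply]
    have h2 : ∑ l, M i l * L l k.val = (M * L) i k.val := by
      simp [Matrix.mul_apply]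
    rw [h1, h2, hML j.val k.val, hML i k.val]
    have hik : i ≠ k.val := fun h => k.prop h.symm
    rw [if_neg hik]
    rcases eq_or_ne j k with h | h
    · rw [if_pos (show (j:Fin n) = k.val from by rw [h]), h, Matrix.one_apply_eq]
      ring
    · rw [if_neg (fun hv => h (Subtype.ext hv)), Matrix.one_apply_ne h]
      ring
  have hLiinv : Li⁻¹ = X := Matrix.inv_eq_left_inv hXLi
  -- compute both sides
  have htrace : (Li⁻¹).trace = (∑ j, M j j) + n * M i i := by
    rw [hLiinv]
    have h1 : X.trace = ∑ j : {x : Fin n // x ≠ i},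
        (M j.val j.val - M j.val i - M i j.val + M i i) := by
      simp [Matrix.trace, Matrix.diag, hX]
    rw [h1, hsub (fun l => M l l - M l i - M i l + M i i)]
    have h2 : ∑ l, (M l l - M l i - M i l + M i i)
        = (∑ l, M l l) - (∑ l, M l i) - (∑ l, M i l) + n * M i i := by
      rw [Finset.sum_add_distrib, Finset.sum_sub_distrib, Finset.sum_sub_distrib,
        Finset.sum_const]
      simp [mul_comm]
    rw [h2, hMcol i, hMrow i]
    ring
  rw [htrace]
  have hLHS : ∑ j, Ω i j = n * M i i + (∑ j, M j j) - (∑ j, M i j) - (∑ j, M j i) := by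
    simp only [hΩ]
    have h3 : ∑ j, (M i i + M j j - M i j - M j i)
        = (∑ _j : Fin n, M i i) + (∑ j, M j j) - (∑ j, M i j) - (∑ j, M j i) := by
      rw [Finset.sum_sub_distrib, Finset.sum_sub_distrib, Finset.sum_add_distrib]
    rw [h3, Finset.sum_const]
    simp [mul_comm]
  rw [hLHS, hMrow i, hMcol i]
  ring
end

section
/- The Kirchhoff index of the directed graph satisfies R = Σ_{i<j} Ω(i,j) = (1/2)·Σ_{i,j} Ω(i,j) = n·tr(L†). -/
open Matrix BigOperators

/-- The Kirchhoff index satisfies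
`R = Σ_{i<j} Ω(i,j) = (1/2)·Σ_{i,j} Ω(i,j) = n·tr(L†)`. -/
theorem directed_kirchhoff_index
    {n : ℕ} (hn : 2 ≤ n)
    (P : Matrix (Fin n) (Fin n) ℝ)
    (hP0 : ∀ i j, 0 ≤ P i j)
    (hProw : ∀ i, ∑ j, P i j = 1)
    (hPirr : ∀ i j, ∃ m : ℕ, 1 ≤ m ∧ 0 < (P ^ m) i j)
    (pv : Fin n → ℝ) (hpv0 : ∀ i, 0 < pv i) (hpvsum : ∑ i, pv i = 1)
    (hstat : pv ᵥ* P = pv)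
    (d : ℝ) (hd : 0 < d)
    (L : Matrix (Fin n) (Fin n) ℝ)
    (hL : L = d • (Matrix.diagonal pv * (1 - P)))
    (M : Matrix (Fin n) (Fin n) ℝ)
    (hM1 : L * M * L = L) (hM2 : M * L * M = M)
    (hM3 : (L * M)ᵀ = L * M) (hM4 : (M * L)ᵀ = M * L)
    (Ω : Fin n → Fin n → ℝ)
    (hΩ : ∀ i j, Ω i j = M i i + M j j - M i j - M j i)
    (R : ℝ)
    (hR : R = ∑ p ∈ Finset.univ.filter (fun p : Fin n × Fin n => p.1 < p.2), Ω p.1 p.2) :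
    R = (1 / 2) * ∑ i, ∑ j, Ω i j ∧ R = (n : ℝ) * M.trace := by
  -- entries of L
  have hLapp : ∀ i j, L i j = d * (pv i * ((1 : Matrix (Fin n) (Fin n) ℝ) i j - P i j)) := by
    intro i j
    rw [hL]
    simp [Matrix.diagonal_mul, Matrix.sub_apply]
  -- row sums of L vanish
  have hLrow : ∀ i, ∑ j, L i j = 0 := by
    intro i
    simp only [hLapp, ← Finset.mul_sum, Finset.sum_sub_distrib]
    rw [hProw i]
    simp [Matrix.one_apply]
  -- column sums of L vanish
  have hLcol : ∀ j, ∑ i, L i j = 0 := by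
    intro j
    have hsj : ∑ i, pv i * P i j = pv j := by
      have := congrFun hstat j
      simpa [Matrix.vecMul, dotProduct] using this
    simp only [hLapp, ← Finset.mul_sum, mul_sub, Finset.sum_sub_distrib]
    rw [hsj]
    have : ∑ i, pv i * (1 : Matrix (Fin n) (Fin n) ℝ) i j = pv j := by
      simp [Matrix.one_apply]
    rw [this]
    ring
  set u : Fin n → ℝ := fun _ => 1 with hu
  have hLu : L *ᵥ u = 0 := by
    funext i
    simpa [Matrix.mulVec, dotProduct, hu] using hLrow i
  have hLtu : Lᵀ *ᵥ u = 0 := by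
    funext j
    simpa [Matrix.mulVec, dotProduct, Matrix.transpose_apply, hu] using hLcol j
  -- row sums of M vanish
  have hMu : M *ᵥ u = 0 := by
    have h1 : (L * M) *ᵥ u = 0 := by
      calc (L * M) *ᵥ u = (L * M)ᵀ *ᵥ u := by rw [hM3]
        _ = (Mᵀ * Lᵀ) *ᵥ u := by rw [Matrix.transpose_mul]
        _ = Mᵀ *ᵥ (Lᵀ *ᵥ u) := by rw [← mulVec_mulVec]
        _ = 0 := by rw [hLtu, Matrix.mulVec_zero]
    calc M *ᵥ u = (M * (L * M)) *ᵥ u := by rw [← mul_assoc, hM2]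
      _ = M *ᵥ ((L * M) *ᵥ u) := by rw [← mulVec_mulVec]
      _ = 0 := by rw [h1, Matrix.mulVec_zero]
  -- column sums of M vanish
  have hMtu : Mᵀ *ᵥ u = 0 := by
    have h2 : Mᵀ = Mᵀ * (M * L) := by
      conv_lhs => rw [← hM2]
      rw [Matrix.transpose_mul, hM4]
    have h3 : (M * L) *ᵥ u = 0 := by
      rw [← mulVec_mulVec, hLu, Matrix.mulVec_zero]
    rw [h2, ← mulVec_mulVec, h3, Matrix.mulVec_zero]
  have hMrow : ∀ i, ∑ j, M i j = 0 := by
    intro i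
    have := congrFun hMu i
    simpa [Matrix.mulVec, dotProduct, hu] using this
  have hMcol : ∀ j, ∑ i, M i j = 0 := by
    intro j
    have := congrFun hMtu j
    simpa [Matrix.mulVec, dotProduct, Matrix.transpose_apply, hu] using this
  -- total sum of resistances
  have htot : ∑ i, ∑ j, Ω i j = 2 * (n : ℝ) * M.trace := by
    have hinner : ∀ i, ∑ j, Ω i j = (n : ℝ) * M i i + M.trace := by
      intro i
      simp only [hΩ, Finset.sum_sub_distrib, Finset.sum_add_distrib]
      rw [hMrow i, hMcol i, Finset.sum_const, Finset.card_univ, Fintype.card_fin]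
      simp [Matrix.trace, Matrix.diag, nsmul_eq_mul]
    simp only [hinner, Finset.sum_add_distrib, Finset.sum_const, Finset.card_univ,
      Fintype.card_fin, ← Finset.mul_sum, nsmul_eq_mul]
    have : ∑ i, M i i = M.trace := by simp [Matrix.trace, Matrix.diag]
    rw [this]
    ring
  -- symmetry and diagonal of Ω
  have hsym : ∀ i j, Ω i j = Ω j i := by
    intro i j; rw [hΩ, hΩ]; ring
  have hdiag : ∀ i, Ω i i = 0 := by
    intro i; rw [hΩ]; ring
  -- R as an iterated sum
  have hRS : R = ∑ i, ∑ j, if i < j then Ω i j else 0 := by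
    rw [hR, Finset.sum_filter, ← Finset.sum_product']
    rfl
  have hTS : (∑ i, ∑ j, if j < i then Ω i j else 0)
      = ∑ i, ∑ j, if i < j then Ω i j else 0 := by
    rw [Finset.sum_comm]
    apply Finset.sum_congr rfl
    intro i _
    apply Finset.sum_congr rfl
    intro j _
    rw [hsym]
  have hsplit : ∑ i, ∑ j, Ω i j
      = (∑ i, ∑ j, if i < j then Ω i j else 0)
        + ∑ i, ∑ j, if j < i then Ω i j else 0 := by
    rw [← Finset.sum_add_distrib]
    apply Finset.sum_congr rfl
    intro i _
    rw [← Finset.sum_add_distrib]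
    apply Finset.sum_congr rfl
    intro j _
    rcases lt_trichotomy i j with h | h | h
    · simp [h, not_lt_of_gt h]
    · subst h; simp [hdiag]
    · simp [h, not_lt_of_gt h]
  have hR2 : R = (1 / 2) * ∑ i, ∑ j, Ω i j := by
    rw [hsplit, hTS, hRS]; ring
  refine ⟨hR2, ?_⟩
  rw [hR2, htot]; ring
end

section
/- The group resistance distance is monotone decreasing: for nonempty subsets X ⊆ Y of the index set with Y a proper subset, tr((L_{\X})⁻¹) ≥ tr((L_{\Y})⁻¹). -/
open Matrix BigOperators

/-- sum over an injective reindexing is at most the full sum, for nonneg functions -/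
lemma aux_sum_comp_le {α β : Type*} [Fintype α] [Fintype β] [DecidableEq α]
    (f : β → α) (hf : Function.Injective f) (g : α → ℝ) (hg : ∀ a, 0 ≤ g a) :
    ∑ b, g (f b) ≤ ∑ a, g a := by
  rw [← Finset.sum_image (f := g) (g := f) (fun x _ y _ h => hf h)]
  exact Finset.sum_le_sum_of_subset_of_nonneg (Finset.subset_univ _) (fun i _ _ => hg i)

lemma aux_pow_nonneg {α : Type*} [Fintype α] [DecidableEq α]
    (A : Matrix α α ℝ) (hA : ∀ i j, 0 ≤ A i j) :
    ∀ (k : ℕ) (i j : α), 0 ≤ (A ^ k) i j := by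
  intro k
  induction k with
  | zero => intro i j; by_cases h : i = j <;> simp [pow_zero, Matrix.one_apply, h]
  | succ k ih =>
    intro i j
    rw [pow_succ, Matrix.mul_apply]
    exact Finset.sum_nonneg fun l _ => mul_nonneg (ih i l) (hA l j)

lemma aux_pow_submatrix_le {α β : Type*} [Fintype α] [DecidableEq α] [Fintype β] [DecidableEq β]
    (f : β → α) (hf : Function.Injective f)
    (A : Matrix α α ℝ) (hA : ∀ i j, 0 ≤ A i j) :
    ∀ (k : ℕ) (i j : β), ((A.submatrix f f) ^ k) i j ≤ (A ^ k) (f i) (f j) := by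
  intro k
  induction k with
  | zero =>
    intro i j
    simp only [pow_zero, Matrix.one_apply]
    by_cases h : i = j
    · simp [h]
    · rw [if_neg h, if_neg (fun hc => h (hf hc))]
  | succ k ih =>
    intro i j
    rw [pow_succ, pow_succ, Matrix.mul_apply, Matrix.mul_apply]
    calc ∑ l, ((A.submatrix f f) ^ k) i l * (A.submatrix f f) l j
        ≤ ∑ l, (A ^ k) (f i) (f l) * A (f l) (f j) := by
          apply Finset.sum_le_sum
          intro l _
          exact mul_le_mul_of_nonneg_right (ih i l) (hA (f l) (f j))
      _ ≤ ∑ l, (A ^ k) (f i) l * A l (f j) :=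
          aux_sum_comp_le f hf (fun l => (A ^ k) (f i) l * A l (f j))
            (fun l => mul_nonneg (aux_pow_nonneg A hA k _ _) (hA _ _))

lemma aux_row_add {α : Type*} [Fintype α] [DecidableEq α]
    (A : Matrix α α ℝ) (a b : ℕ) (i : α) :
    ∑ j, (A ^ (a + b)) i j = ∑ l, (A ^ a) i l * ∑ j, (A ^ b) l j := by
  rw [pow_add]
  simp_rw [Matrix.mul_apply, Finset.mul_sum]
  rw [Finset.sum_comm]


/-- row sums of powers are ≤ 1 when A is nonneg with row sums ≤ 1 -/
lemma aux_row_le_one {α : Type*} [Fintype α] [DecidableEq α]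
    (A : Matrix α α ℝ) (hA : ∀ i j, 0 ≤ A i j) (hrow : ∀ i, ∑ j, A i j ≤ 1) :
    ∀ (k : ℕ) (i : α), ∑ j, (A ^ k) i j ≤ 1 := by
  intro k
  induction k with
  | zero => intro i; simp [pow_zero, Matrix.one_apply]
  | succ k ih =>
    intro i
    rw [aux_row_add A k 1 i]
    calc ∑ l, (A ^ k) i l * ∑ j, (A ^ 1) l j
        ≤ ∑ l, (A ^ k) i l * 1 := by
          apply Finset.sum_le_sum; intro l _
          exact mul_le_mul_of_nonneg_left (by simpa using hrow l) (aux_pow_nonneg A hA k i l)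
      _ = ∑ l, (A ^ k) i l := by simp
      _ ≤ 1 := ih i

/-- row sums of powers are antitone in the exponent -/
lemma aux_row_mono {α : Type*} [Fintype α] [DecidableEq α]
    (A : Matrix α α ℝ) (hA : ∀ i j, 0 ≤ A i j) (hrow : ∀ i, ∑ j, A i j ≤ 1) :
    ∀ (a b : ℕ), a ≤ b → ∀ i, ∑ j, (A ^ b) i j ≤ ∑ j, (A ^ a) i j := by
  intro a b hab i
  obtain ⟨c, rfl⟩ := Nat.exists_eq_add_of_le hab
  rw [aux_row_add A a c i]
  calc ∑ l, (A ^ a) i l * ∑ j, (A ^ c) l j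
      ≤ ∑ l, (A ^ a) i l * 1 := by
        apply Finset.sum_le_sum; intro l _
        exact mul_le_mul_of_nonneg_left (aux_row_le_one A hA hrow c l) (aux_pow_nonneg A hA a i l)
    _ = ∑ j, (A ^ a) i j := by simp

/-- geometric decay of row sums along multiples of M -/
lemma aux_row_geom {α : Type*} [Fintype α] [DecidableEq α]
    (A : Matrix α α ℝ) (hA : ∀ i j, 0 ≤ A i j) (hrow : ∀ i, ∑ j, A i j ≤ 1)
    (M : ℕ) (s : ℝ) (hs0 : 0 ≤ s) (hs : ∀ i, ∑ j, (A ^ M) i j ≤ s) :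
    ∀ (m : ℕ) (i : α), ∑ j, (A ^ (M * m)) i j ≤ s ^ m := by
  intro m
  induction m with
  | zero => intro i; simpa using aux_row_le_one A hA hrow 0 i
  | succ m ih =>
    intro i
    have : M * (m + 1) = M * m + M := by ring
    rw [this, aux_row_add A (M * m) M i]
    calc ∑ l, (A ^ (M * m)) i l * ∑ j, (A ^ M) l j
        ≤ ∑ l, (A ^ (M * m)) i l * s := by
          apply Finset.sum_le_sum; intro l _
          exact mul_le_mul_of_nonneg_left (hs l) (aux_pow_nonneg A hA _ i l)
      _ = (∑ l, (A ^ (M * m)) i l) * s := by rw [← Finset.sum_mul]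
      _ ≤ s ^ m * s := mul_le_mul_of_nonneg_right (ih i) hs0
      _ = s ^ (m + 1) := by ring

/-- summability of s^(k/M) -/
lemma aux_summable_pow_div (s : ℝ) (h0 : 0 < s) (h1 : s < 1) (M : ℕ) (hM : 1 ≤ M) :
    Summable (fun k : ℕ => s ^ (k / M)) := by
  set t : ℝ := s ^ ((M : ℝ)⁻¹) with ht
  have hMpos : (0:ℝ) < M := by exact_mod_cast hM
  have ht0 : 0 ≤ t := Real.rpow_nonneg h0.le _
  have ht1 : t < 1 := Real.rpow_lt_one h0.le h1 (by positivity)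
  apply Summable.of_nonneg_of_le (fun k => pow_nonneg h0.le _)
    (f := fun k => s⁻¹ * t ^ k)
  · intro k
    have hk1 : ((k : ℝ) / M - 1) ≤ ((k / M : ℕ) : ℝ) := by
      have h2 : k < M * (k / M) + M := by
        have h := Nat.div_add_mod k M
        have h4 := Nat.mod_lt k (show 0 < M by omega)
        omega
      have h3 : (k : ℝ) < M * ((k / M : ℕ) : ℝ) + M := by exact_mod_cast h2
      rw [sub_le_iff_le_add, div_le_iff₀ hMpos]
      linarith [h3]
    have step1 : s ^ (k / M) ≤ s ^ ((k : ℝ) / M - 1) := by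
      rw [← Real.rpow_natCast s (k / M)]
      exact Real.rpow_le_rpow_of_exponent_ge h0 h1.le hk1
    have step2 : s ^ ((k : ℝ) / M - 1) = s⁻¹ * t ^ k := by
      rw [Real.rpow_sub h0, Real.rpow_one, ht, ← Real.rpow_natCast (s ^ ((M:ℝ)⁻¹)) k,
        ← Real.rpow_mul h0.le]
      rw [mul_comm ((M:ℝ)⁻¹) ((k:ℝ)), ← div_eq_mul_inv]
      ring
    exact step1.trans_eq step2
  · exact (summable_geometric_of_lt_one ht0 ht1).mul_left _

/-- entrywise summability of the Neumann series -/
lemma aux_summable_entries {α : Type*} [Fintype α] [DecidableEq α]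
    (A : Matrix α α ℝ) (hA : ∀ i j, 0 ≤ A i j) (hrow : ∀ i, ∑ j, A i j ≤ 1)
    (M : ℕ) (hM : 1 ≤ M) (s : ℝ) (hs0 : 0 < s) (hs1 : s < 1)
    (hs : ∀ i, ∑ j, (A ^ M) i j ≤ s) (i j : α) :
    Summable (fun k : ℕ => (A ^ k) i j) := by
  apply Summable.of_nonneg_of_le (fun k => aux_pow_nonneg A hA k i j)
    (f := fun k => s ^ (k / M))
  · intro k
    have h1 : (A ^ k) i j ≤ ∑ l, (A ^ k) i l :=
      Finset.single_le_sum (f := fun l => (A ^ k) i l)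
        (fun l _ => aux_pow_nonneg A hA k i l) (Finset.mem_univ j)
    have h2' : M * (k / M) ≤ k := Nat.mul_div_le k M
    have h3 : ∑ l, (A ^ (M * (k / M))) i l ≤ s ^ (k / M) :=
      aux_row_geom A hA hrow M s hs0.le hs (k / M) i
    exact h1.trans ((aux_row_mono A hA hrow _ _ h2' i).trans h3)
  · exact aux_summable_pow_div s hs0 hs1 M hM

/-- the Neumann series is a right inverse of 1 - A -/
lemma aux_neumann {α : Type*} [Fintype α] [DecidableEq α]
    (A : Matrix α α ℝ) (hsum : ∀ i j, Summable fun k : ℕ => (A ^ k) i j) :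
    (1 - A) * (Matrix.of fun i j => ∑' k : ℕ, (A ^ k) i j) = 1 := by
  ext i j
  rw [Matrix.mul_apply]
  have key : ∀ l, ((1 : Matrix α α ℝ) - A) i l * (∑' k : ℕ, (A ^ k) l j)
      = (if i = l then (∑' k : ℕ, (A ^ k) l j) else 0) - ∑' k : ℕ, A i l * (A ^ k) l j := by
    intro l
    rw [Matrix.sub_apply, Matrix.one_apply, sub_mul, Summable.tsum_mul_left _ (hsum l j)]
    by_cases h : i = l
    · rw [if_pos h, if_pos h, one_mul]
    · rw [if_neg h, if_neg h, zero_mul, zero_sub]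
  simp_rw [Matrix.of_apply, key, Finset.sum_sub_distrib, Finset.sum_ite_eq, Finset.mem_univ, if_true]
  have hsum2 : ∀ l, Summable fun k : ℕ => A i l * (A ^ k) l j :=
    fun l => (hsum l j).mul_left _
  rw [← Summable.tsum_finsetSum (fun l _ => hsum2 l)]
  have hswap : ∀ k : ℕ, ∑ l, A i l * (A ^ k) l j = (A ^ (k + 1)) i j := by
    intro k
    rw [pow_succ']
    rw [Matrix.mul_apply]
  simp_rw [hswap]
  rw [Summable.tsum_eq_zero_add (hsum i j)]
  simp [pow_zero, Matrix.one_apply]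

lemma aux_Ppow_row {n : ℕ} (P : Matrix (Fin n) (Fin n) ℝ)
    (hProw : ∀ i, ∑ j, P i j = 1) :
    ∀ (m : ℕ) (i : Fin n), ∑ j, (P ^ m) i j = 1 := by
  intro m
  induction m with
  | zero => intro i; simp [pow_zero, Matrix.one_apply]
  | succ m ih =>
    intro i
    rw [aux_row_add P m 1 i]
    simp_rw [pow_one, hProw, mul_one]
    exact ih i

/-- Existence of a power with all row sums strictly below a common `s < 1`. -/
lemma aux_exists_bound {n : ℕ} (P : Matrix (Fin n) (Fin n) ℝ)
    (hP0 : ∀ i j, 0 ≤ P i j) (hProw : ∀ i, ∑ j, P i j = 1)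
    (hPirr : ∀ i j, ∃ m : ℕ, 1 ≤ m ∧ 0 < (P ^ m) i j)
    (S : Finset (Fin n)) (x : Fin n) (hx : x ∈ S)
    (hne : Nonempty {i : Fin n // i ∉ S}) :
    ∃ (M : ℕ) (s : ℝ), 1 ≤ M ∧ 0 < s ∧ s < 1 ∧
      ∀ i : {i : Fin n // i ∉ S},
        ∑ j : {i : Fin n // i ∉ S},
          ((P.submatrix (Subtype.val : {i : Fin n // i ∉ S} → Fin n) Subtype.val) ^ M) i j ≤ s := by
  set Q := P.submatrix (Subtype.val : {i : Fin n // i ∉ S} → Fin n) Subtype.val with hQ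
  have hval : Function.Injective (Subtype.val : {i : Fin n // i ∉ S} → Fin n) :=
    Subtype.val_injective
  have hQ0 : ∀ i j, 0 ≤ Q i j := fun i j => hP0 _ _
  have hQrow : ∀ i, ∑ j, Q i j ≤ 1 := by
    intro i
    calc ∑ j, Q i j = ∑ j : {i : Fin n // i ∉ S}, P i.val j.val := rfl
      _ ≤ ∑ j, P i.val j := aux_sum_comp_le _ hval _ (fun j => hP0 _ _)
      _ = 1 := hProw i.val
  have hm : ∀ i : {i : Fin n // i ∉ S}, ∃ m : ℕ, 1 ≤ m ∧ 0 < (P ^ m) i.val x :=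
    fun i => hPirr i.val x
  choose m hm1 hm2 using hm
  set M : ℕ := Finset.univ.sup m with hM
  have hmM : ∀ i, m i ≤ M := fun i => Finset.le_sup (Finset.mem_univ i)
  have hM1 : 1 ≤ M := le_trans (hm1 hne.some) (hmM hne.some)
  -- each row sum of Q^M is < 1
  have hrowM : ∀ i : {i : Fin n // i ∉ S}, ∑ j, (Q ^ M) i j < 1 := by
    intro i
    have h1 : ∑ j, (Q ^ M) i j ≤ ∑ j, (Q ^ (m i)) i j :=
      aux_row_mono Q hQ0 hQrow (m i) M (hmM i) i
    have h2 : ∑ j, (Q ^ (m i)) i j ≤ ∑ j : {i : Fin n // i ∉ S}, (P ^ (m i)) i.val j.val :=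
      Finset.sum_le_sum (fun j _ => aux_pow_submatrix_le _ hval P hP0 (m i) i j)
    have h3 : ∑ j : {i : Fin n // i ∉ S}, (P ^ (m i)) i.val j.val
        ≤ ∑ j ∈ Finset.univ.erase x, (P ^ (m i)) i.val j := by
      rw [← Finset.sum_image (f := fun j => (P ^ (m i)) i.val j)
        (g := (Subtype.val : {i : Fin n // i ∉ S} → Fin n)) (fun a _ b _ h => hval h)]
      apply Finset.sum_le_sum_of_subset_of_nonneg
      · intro j hj
        simp only [Finset.mem_image] at hj
        obtain ⟨a, _, rfl⟩ := hj
        exact Finset.mem_erase.2 ⟨fun h => a.prop (h ▸ hx), Finset.mem_univ _⟩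
      · intro j _ _; exact aux_pow_nonneg P hP0 _ _ _
    have h4 : ∑ j ∈ Finset.univ.erase x, (P ^ (m i)) i.val j
        = 1 - (P ^ (m i)) i.val x := by
      rw [Finset.sum_erase_eq_sub (Finset.mem_univ x), aux_Ppow_row P hProw]
    have h5 := hm2 i
    linarith [h1.trans (h2.trans (h3.trans_eq h4))]
  have huniv : (Finset.univ : Finset {i : Fin n // i ∉ S}).Nonempty := Finset.univ_nonempty
  set s : ℝ := max (Finset.univ.sup' huniv (fun i => ∑ j, (Q ^ M) i j)) (1/2) with hs
  refine ⟨M, s, hM1, lt_of_lt_of_le (by norm_num) (le_max_right _ _), ?_, ?_⟩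
  · apply max_lt _ (by norm_num)
    exact (Finset.sup'_lt_iff huniv).2 (fun i _ => hrowM i)
  · intro i
    exact le_trans (Finset.le_sup' (fun i => ∑ j, (Q ^ M) i j) (Finset.mem_univ i)) (le_max_left _ _)

/-- Trace of the inverse of a principal submatrix of the directed Laplacian. -/
lemma aux_trace_formula {n : ℕ} (P : Matrix (Fin n) (Fin n) ℝ) (pv : Fin n → ℝ)
    (hpv0 : ∀ i, 0 < pv i) (d : ℝ) (hd : 0 < d)
    (S : Finset (Fin n))
    (hsum : ∀ i j : {i : Fin n // i ∉ S}, Summable fun k : ℕ =>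
      ((P.submatrix (Subtype.val : {i : Fin n // i ∉ S} → Fin n) Subtype.val) ^ k) i j)
    (LS : Matrix {i : Fin n // i ∉ S} {i : Fin n // i ∉ S} ℝ)
    (hLS : LS = (d • (Matrix.diagonal pv * (1 - P))).submatrix Subtype.val Subtype.val) :
    (LS⁻¹).trace = d⁻¹ * ∑ i : {i : Fin n // i ∉ S},
      (∑' k : ℕ, ((P.submatrix (Subtype.val : {i : Fin n // i ∉ S} → Fin n) Subtype.val) ^ k) i i)
        * (pv i.val)⁻¹ := by
  set Q := P.submatrix (Subtype.val : {i : Fin n // i ∉ S} → Fin n) Subtype.val with hQ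
  have hval : Function.Injective (Subtype.val : {i : Fin n // i ∉ S} → Fin n) :=
    Subtype.val_injective
  set SS : Matrix {i : Fin n // i ∉ S} {i : Fin n // i ∉ S} ℝ :=
    Matrix.of fun i j => ∑' k : ℕ, (Q ^ k) i j with hSS
  set D : Matrix {i : Fin n // i ∉ S} {i : Fin n // i ∉ S} ℝ :=
    Matrix.diagonal (fun i => pv i.val) with hD
  set Dinv : Matrix {i : Fin n // i ∉ S} {i : Fin n // i ∉ S} ℝ :=
    Matrix.diagonal (fun i => (pv i.val)⁻¹) with hDinv
  have hLS' : LS = d • (D * (1 - Q)) := by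
    rw [hLS]
    ext i j
    simp only [Matrix.submatrix_apply, Matrix.smul_apply, Matrix.diagonal_mul, smul_eq_mul,
      hD, Matrix.sub_apply, Matrix.one_apply, hQ]
    congr 2
    by_cases h : i = j
    · simp [h]
    · rw [if_neg h, if_neg (fun hc => h (hval hc))]
  set R : Matrix {i : Fin n // i ∉ S} {i : Fin n // i ∉ S} ℝ := d⁻¹ • (SS * Dinv) with hR
  have hright : LS * R = 1 := by
    rw [hLS', hR, Matrix.smul_mul, Matrix.mul_smul, smul_smul, mul_inv_cancel₀ hd.ne', one_smul]
    calc D * (1 - Q) * (SS * Dinv) = D * ((1 - Q) * SS) * Dinv := by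
          rw [Matrix.mul_assoc, Matrix.mul_assoc, Matrix.mul_assoc]
      _ = D * Dinv := by rw [aux_neumann Q hsum, Matrix.mul_one]
      _ = 1 := by
          rw [hD, hDinv, Matrix.diagonal_mul_diagonal]
          convert Matrix.diagonal_one
          exact mul_inv_cancel₀ (hpv0 _).ne'
  rw [Matrix.inv_eq_right_inv hright, hR, Matrix.trace_smul, smul_eq_mul]
  congr 1
  rw [Matrix.trace]
  apply Finset.sum_congr rfl
  intro i _
  rw [Matrix.diag_apply, Matrix.mul_diagonal]
  rfl

lemma aux_Qrow {n : ℕ} (P : Matrix (Fin n) (Fin n) ℝ)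
    (hP0 : ∀ i j, 0 ≤ P i j) (hProw : ∀ i, ∑ j, P i j = 1) (S : Finset (Fin n)) :
    ∀ i : {i : Fin n // i ∉ S},
      ∑ j : {i : Fin n // i ∉ S}, (P.submatrix Subtype.val Subtype.val) i j ≤ 1 := by
  intro i
  calc ∑ j : {i : Fin n // i ∉ S}, P i.val j.val
      ≤ ∑ j, P i.val j := aux_sum_comp_le _ Subtype.val_injective _ (fun j => hP0 _ _)
    _ = 1 := hProw i.val

/-- Monotonicity of the group resistance distance: for nonempty subsets
`X ⊆ Y` with `Y` proper, `tr((L_{\X})⁻¹) ≥ tr((L_{\Y})⁻¹)`. -/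
theorem directed_group_resistance_monotone
    {n : ℕ} (hn : 2 ≤ n)
    (P : Matrix (Fin n) (Fin n) ℝ)
    (hP0 : ∀ i j, 0 ≤ P i j)
    (hProw : ∀ i, ∑ j, P i j = 1)
    (hPirr : ∀ i j, ∃ m : ℕ, 1 ≤ m ∧ 0 < (P ^ m) i j)
    (pv : Fin n → ℝ) (hpv0 : ∀ i, 0 < pv i) (hpvsum : ∑ i, pv i = 1)
    (hstat : pv ᵥ* P = pv)
    (d : ℝ) (hd : 0 < d)
    (L : Matrix (Fin n) (Fin n) ℝ)
    (hL : L = d • (Matrix.diagonal pv * (1 - P)))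
    (X Y : Finset (Fin n)) (hXnonempty : X.Nonempty) (hXY : X ⊆ Y)
    (hYproper : Y ≠ Finset.univ)
    (LX : Matrix {i : Fin n // i ∉ X} {i : Fin n // i ∉ X} ℝ)
    (hLX : LX = L.submatrix Subtype.val Subtype.val)
    (LY : Matrix {i : Fin n // i ∉ Y} {i : Fin n // i ∉ Y} ℝ)
    (hLY : LY = L.submatrix Subtype.val Subtype.val) :
    (LY⁻¹).trace ≤ (LX⁻¹).trace := by
  obtain ⟨x, hxX⟩ := hXnonempty
  have hxY : x ∈ Y := hXY hxX
  have hy0 : ∃ a, a ∉ Y := by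
    by_contra h
    push_neg at h
    exact hYproper (Finset.eq_univ_iff_forall.2 h)
  obtain ⟨y0, hy0⟩ := hy0
  have hneY : Nonempty {i : Fin n // i ∉ Y} := ⟨⟨y0, hy0⟩⟩
  have hneX : Nonempty {i : Fin n // i ∉ X} := ⟨⟨y0, fun h => hy0 (hXY h)⟩⟩
  set QX := P.submatrix (Subtype.val : {i : Fin n // i ∉ X} → Fin n) Subtype.val with hQX
  set QY := P.submatrix (Subtype.val : {i : Fin n // i ∉ Y} → Fin n) Subtype.val with hQY
  have hQX0 : ∀ i j, 0 ≤ QX i j := fun i j => hP0 _ _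
  have hQY0 : ∀ i j, 0 ≤ QY i j := fun i j => hP0 _ _
  -- summability
  obtain ⟨MX, sX, hMX1, hsX0, hsX1, hsXrow⟩ :=
    aux_exists_bound P hP0 hProw hPirr X x hxX hneX
  obtain ⟨MY, sY, hMY1, hsY0, hsY1, hsYrow⟩ :=
    aux_exists_bound P hP0 hProw hPirr Y x hxY hneY
  have hsumX : ∀ i j, Summable fun k : ℕ => (QX ^ k) i j :=
    fun i j => aux_summable_entries QX hQX0 (aux_Qrow P hP0 hProw X) MX hMX1 sX hsX0 hsX1
      hsXrow i j
  have hsumY : ∀ i j, Summable fun k : ℕ => (QY ^ k) i j :=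
    fun i j => aux_summable_entries QY hQY0 (aux_Qrow P hP0 hProw Y) MY hMY1 sY hsY0 hsY1
      hsYrow i j
  -- trace formulas
  have htrX := aux_trace_formula P pv hpv0 d hd X hsumX LX (by rw [hLX, hL])
  have htrY := aux_trace_formula P pv hpv0 d hd Y hsumY LY (by rw [hLY, hL])
  rw [htrX, htrY]
  -- comparison
  set e : {i : Fin n // i ∉ Y} → {i : Fin n // i ∉ X} :=
    fun i => ⟨i.val, fun h => i.prop (hXY h)⟩ with he
  have heinj : Function.Injective e := by
    intro a b h
    have : (e a).val = (e b).val := by rw [h]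
    exact Subtype.ext this
  have hQYe : QY = QX.submatrix e e := by ext i j; rfl
  have hpow : ∀ (k : ℕ) (i j : {i : Fin n // i ∉ Y}),
      (QY ^ k) i j ≤ (QX ^ k) (e i) (e j) := by
    intro k i j
    rw [hQYe]
    exact aux_pow_submatrix_le e heinj QX hQX0 k i j
  set g : {i : Fin n // i ∉ X} → ℝ :=
    fun i => (∑' k : ℕ, (QX ^ k) i i) * (pv i.val)⁻¹ with hg
  have hg0 : ∀ i, 0 ≤ g i := fun i =>
    mul_nonneg (tsum_nonneg (fun k => aux_pow_nonneg QX hQX0 k i i))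
      (inv_nonneg.2 (hpv0 _).le)
  apply mul_le_mul_of_nonneg_left _ (inv_nonneg.2 hd.le)
  calc ∑ i : {i : Fin n // i ∉ Y}, (∑' k : ℕ, (QY ^ k) i i) * (pv i.val)⁻¹
      ≤ ∑ i : {i : Fin n // i ∉ Y}, g (e i) := by
        apply Finset.sum_le_sum
        intro i _
        apply mul_le_mul_of_nonneg_right _ (inv_nonneg.2 (hpv0 _).le)
        exact Summable.tsum_le_tsum (fun k => hpow k i i) (hsumY i i) (hsumX (e i) (e i))
    _ ≤ ∑ i, g i := aux_sum_comp_le e heinj g hg0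
end

section
/- The group resistance distance is supermodular: for nonempty subsets X ⊆ Y of the index set and an index v with v ∉ Y and Y ∪ {v} a proper subset of the index set, tr((L_{\X})⁻¹) − tr((L_{\(X∪{v})})⁻¹) ≥ tr((L_{\Y})⁻¹) − tr((L_{\(Y∪{v})})⁻¹). -/
/-!
Write `N_S = (1 - P_{\S})⁻¹` for the fundamental matrix of the chain killed on entering `S`, so
that `(L_{\S})⁻¹ = d⁻¹ N_S Π⁻¹`. Since `P_{\S}` is nonnegative with powers tending to zero,
`N_S = ∑ₖ P_{\S}ᵏ` is entrywise nonnegative and entrywise decreasing as `S` grows.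
Deleting one more index `v` is a rank-one Schur complement:
`Ω(S) - Ω(S ∪ {v}) = ∑ᵢ G(i,v) G(v,i) / G(v,v) = d⁻¹ ∑ᵢ h_S(i) N_S(v,i) / πᵢ`,
where `G = (L_{\S})⁻¹` and `h_S(i) = N_S(i,v) / N_S(v,v)` is the probability of reaching `v`
before `S`. Splitting at the step that enters `v` gives `h_S(i) = ∑ₗ N_{S ∪ {v}}(i,l) P(l,v)`
for `i ≠ v`, so `h_S` also decreases as `S` grows, and the sum for `Y` is bounded termwise by the
one for `X ⊆ Y`.
-/

open Matrix Finset Filter Topology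

namespace Matrix

variable {ι κ R : Type*}

section

variable {S T : Finset ι} {v : ι}

def complEmbedding (h : S ⊆ T) : {i // i ∉ T} ↪ {i // i ∉ S} :=
  Subtype.impEmbedding _ _ fun _ hT hS => hT (h hS)

@[simp]
theorem complEmbedding_apply_coe (h : S ⊆ T) (i : {i // i ∉ T}) : (complEmbedding h i : ι) = i :=
  rfl

theorem range_complEmbedding_insert [DecidableEq ι] (hv : v ∉ S) :
    Set.range (complEmbedding (subset_insert v S)) = {⟨v, hv⟩}ᶜ := by
  ext ⟨i, hi⟩
  constructor
  · rintro ⟨j, hj⟩ h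
    exact j.2 (mem_insert.2 (Or.inl (congrArg Subtype.val (hj.trans h))))
  · intro hne
    exact ⟨⟨i, by simpa [hi] using fun h => hne (Subtype.ext h)⟩, rfl⟩

end

variable [Fintype ι]

theorem mulVec_le_mulVec_of_nonneg [Semiring R] [PartialOrder R] [IsOrderedRing R]
    {A : Matrix κ ι R} (hA : ∀ i j, 0 ≤ A i j) {w w' : ι → R} (h : w ≤ w') :
    A *ᵥ w ≤ A *ᵥ w' :=
  fun i => sum_le_sum fun j _ => mul_le_mul_of_nonneg_left (h j) (hA i j)

variable [Fintype κ]

theorem sum_comp_le_sum_of_injective [AddCommMonoid R] [PartialOrder R] [IsOrderedAddMonoid R]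
    {f : κ → ι} (hf : f.Injective) (g : ι → R) (hg : 0 ≤ g) : ∑ k, g (f k) ≤ ∑ i, g i := by
  simpa using sum_le_univ_sum_of_nonneg (s := univ.map ⟨f, hf⟩) hg

variable [DecidableEq ι]

theorem sum_eq_add_sum_of_range_eq_compl [AddCommMonoid R] {f : κ → ι} (hf : f.Injective) {v : ι}
    (hrange : Set.range f = {v}ᶜ) (g : ι → R) : ∑ i, g i = g v + ∑ k, g (f k) := by
  let e : κ ≃ {i // i ≠ v} := (Equiv.ofInjective f hf).trans
    ((Equiv.setCongr hrange).trans (Equiv.subtypeEquivRight fun _ => Set.mem_compl_singleton_iff))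
  rw [Fintype.sum_eq_add_sum_subtype_ne g v, ← e.sum_comp]
  rfl

section DeleteOne

variable {K : Type*} [Field K] {A : Matrix ι ι K} {f : κ → ι} {v : ι}
variable (hf : f.Injective) (hrange : Set.range f = {v}ᶜ) (hA : IsUnit A.det) (hv : A⁻¹ v v ≠ 0)
include hf hrange hA hv

theorem sum_inv_sub_mul_apply (k : κ) (c : ι) :
    ∑ l, (A⁻¹ (f k) (f l) - A⁻¹ (f k) v * A⁻¹ v (f l) / A⁻¹ v v) * A (f l) c =
      (1 : Matrix ι ι K) (f k) c - A⁻¹ (f k) v / A⁻¹ v v * (1 : Matrix ι ι K) v c := by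
  rw [← nonsing_inv_mul A hA, mul_apply, mul_apply, mul_sum, ← sum_sub_distrib,
    sum_eq_add_sum_of_range_eq_compl hf hrange]
  have hgv : A⁻¹ (f k) v * A v c - A⁻¹ (f k) v / A⁻¹ v v * (A⁻¹ v v * A v c) = 0 := by
    field_simp; ring
  rw [hgv, zero_add]
  exact sum_congr rfl fun l _ => by ring

variable [DecidableEq κ]

theorem inv_submatrix_of_range_eq_compl :
    (A.submatrix f f)⁻¹ =
      of fun k k' => A⁻¹ (f k) (f k') - A⁻¹ (f k) v * A⁻¹ v (f k') / A⁻¹ v v := by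
  refine inv_eq_left_inv (ext fun k k' => ?_)
  have hk' : f k' ∈ ({v}ᶜ : Set ι) := hrange ▸ Set.mem_range_self k'
  simp only [mul_apply, of_apply, submatrix_apply]
  rw [sum_inv_sub_mul_apply hf hrange hA hv _ _, one_apply_ne (Ne.symm hk')]
  simp [one_apply, hf.eq_iff]

theorem trace_inv_sub_trace_inv_submatrix_of_range_eq_compl :
    A⁻¹.trace - (A.submatrix f f)⁻¹.trace = ∑ i, A⁻¹ i v * A⁻¹ v i / A⁻¹ v v := by
  rw [inv_submatrix_of_range_eq_compl hf hrange hA hv, trace, trace,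
    sum_eq_add_sum_of_range_eq_compl hf hrange, sum_eq_add_sum_of_range_eq_compl hf hrange]
  simp only [diag_apply, of_apply, sum_sub_distrib]
  field_simp
  ring

theorem inv_apply_div_inv_apply_self_of_range_eq_compl (k : κ) :
    A⁻¹ (f k) v / A⁻¹ v v = -((A.submatrix f f)⁻¹ *ᵥ fun l => A (f l) v) k := by
  have hk : f k ∈ ({v}ᶜ : Set ι) := hrange ▸ Set.mem_range_self k
  rw [inv_submatrix_of_range_eq_compl hf hrange hA hv]
  simp only [mulVec, dotProduct, of_apply]
  rw [sum_inv_sub_mul_apply hf hrange hA hv _ _, one_apply_ne hk, one_apply_eq]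
  ring

end DeleteOne

variable [DecidableEq κ]

theorem pow_submatrix_apply_le [Semiring R] [PartialOrder R] [IsOrderedRing R] {Q : Matrix ι ι R}
    (hQ : ∀ i j, 0 ≤ Q i j) {f : κ → ι} (hf : f.Injective) (k : ℕ) (i j : κ) :
    (Q.submatrix f f ^ k) i j ≤ (Q ^ k) (f i) (f j) := by
  induction k generalizing j with
  | zero => by_cases h : i = j <;> simp [h, hf.ne]
  | succ k ih =>
    rw [pow_succ, pow_succ, mul_apply, mul_apply]
    calc ∑ l, (Q.submatrix f f ^ k) i l * Q (f l) (f j)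
        ≤ ∑ l, (Q ^ k) (f i) (f l) * Q (f l) (f j) :=
          sum_le_sum fun l _ => mul_le_mul_of_nonneg_right (ih l) (hQ _ _)
      _ ≤ ∑ l, (Q ^ k) (f i) l * Q l (f j) :=
          sum_comp_le_sum_of_injective hf (fun l => (Q ^ k) (f i) l * Q l (f j))
            fun l => mul_nonneg (pow_apply_nonneg hQ k _ _) (hQ _ _)

/-- The transition matrix of a sub-Markov chain that is killed almost surely. -/
structure IsTransient (Q : Matrix ι ι ℝ) : Prop where
  nonneg : ∀ i j, 0 ≤ Q i j
  tendsto_pow : Tendsto (Q ^ ·) atTop (𝓝 0)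

theorem isTransient_of_mulVec_one {Q : Matrix ι ι ℝ} (hQ : ∀ i j, 0 ≤ Q i j)
    (hsub : Q *ᵥ 1 ≤ 1) (hloss : ∀ i, ∃ m, (Q ^ m *ᵥ 1) i < 1) : IsTransient Q := by
  -- `r k i` is the mass left after `k` steps from `i`: it decreases in `k`, and after `M` steps
  -- it is at most `θ < 1` from every state, so `r (M * q) ≤ θ ^ q`.
  set r : ℕ → ι → ℝ := fun k => Q ^ k *ᵥ 1 with hr
  have hr_add (a b : ℕ) : r (a + b) = Q ^ a *ᵥ r b := by simp [hr, pow_add, mulVec_mulVec]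
  have hr_nonneg (k : ℕ) : 0 ≤ r k := fun i =>
    sum_nonneg fun j _ => mul_nonneg (pow_apply_nonneg hQ k i j) zero_le_one
  have hr_anti : Antitone r := antitone_nat_of_succ_le fun k => by
    rw [hr_add k 1]
    exact mulVec_le_mulVec_of_nonneg (pow_apply_nonneg hQ k) (by simpa [hr] using hsub)
  choose m hm using hloss
  set M := ∑ i, m i + 1
  set θ := ‖r M‖
  have hθ : θ < 1 := (pi_norm_lt_iff one_pos).2 fun i => by
    rw [Real.norm_of_nonneg (hr_nonneg M i)]
    exact (hr_anti ((single_le_sum (fun i _ => Nat.zero_le (m i)) (mem_univ i)).trans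
      (Nat.le_add_right _ 1)) i).trans_lt (hm i)
  have hr_mul (q : ℕ) : r (M * q) ≤ θ ^ q • 1 := by
    induction q with
    | zero => simp [hr]
    | succ q ih =>
      calc r (M * (q + 1)) = Q ^ (M * q) *ᵥ r M := by rw [mul_add_one, hr_add]
        _ ≤ Q ^ (M * q) *ᵥ (θ • 1) := mulVec_le_mulVec_of_nonneg (pow_apply_nonneg hQ _)
            fun i => by simpa using (le_abs_self _).trans (norm_le_pi_norm (r M) i)
        _ = θ • r (M * q) := mulVec_smul _ _ _
        _ ≤ θ • θ ^ q • 1 := smul_le_smul_of_nonneg_left ih (norm_nonneg _)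
        _ = θ ^ (q + 1) • 1 := by rw [smul_smul, pow_succ']
  refine ⟨hQ, tendsto_pi_nhds.2 fun i => tendsto_pi_nhds.2 fun j => ?_⟩
  refine squeeze_zero (fun k => pow_apply_nonneg hQ k i j) (fun k => ?_)
    ((tendsto_pow_atTop_nhds_zero_of_lt_one (norm_nonneg _) hθ).comp
      (Nat.tendsto_div_const_atTop (n := M) (Nat.succ_ne_zero _)))
  calc (Q ^ k) i j ≤ r k i := by
        simpa [hr, mulVec, dotProduct] using
          single_le_sum (fun l _ => pow_apply_nonneg hQ k i l) (mem_univ j)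
    _ ≤ r (M * (k / M)) i := hr_anti (Nat.mul_div_le k M) i
    _ ≤ θ ^ (k / M) := by simpa using hr_mul (k / M) i

theorem isTransient_submatrix_of_mem_rowStochastic {P : Matrix ι ι ℝ}
    (hP : P ∈ rowStochastic ℝ ι) {f : κ → ι} (hf : f.Injective) {z : ι} (hz : z ∉ Set.range f)
    (hreach : ∀ i, ∃ m, 0 < (P ^ m) i z) : IsTransient (P.submatrix f f) := by
  have hrow (m : ℕ) (i : κ) : ∑ l, (P ^ m) (f i) (f l) + (P ^ m) (f i) z ≤ 1 := by
    have hPm := pow_mem hP m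
    calc _ = ∑ j ∈ insert z (univ.map ⟨f, hf⟩), (P ^ m) (f i) j := by
          rw [sum_insert (by simpa using hz), sum_map, add_comm]; rfl
      _ ≤ ∑ j, (P ^ m) (f i) j :=
          sum_le_univ_sum_of_nonneg fun j => nonneg_of_mem_rowStochastic hPm
      _ = 1 := sum_row_of_mem_rowStochastic hPm (f i)
  refine isTransient_of_mulVec_one (fun i j => nonneg_of_mem_rowStochastic hP) (fun i => ?_)
    fun i => ?_
  · simpa [mulVec, dotProduct] using
      (hrow 1 i).trans' (le_add_of_nonneg_right (nonneg_of_mem_rowStochastic (pow_mem hP 1)))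
  · obtain ⟨m, hm⟩ := hreach (f i)
    refine ⟨m, ?_⟩
    calc (P.submatrix f f ^ m *ᵥ 1) i ≤ ∑ l, (P ^ m) (f i) (f l) := by
          simpa [mulVec, dotProduct] using
            sum_le_sum fun l _ =>
              pow_submatrix_apply_le (fun _ _ => nonneg_of_mem_rowStochastic hP) hf m i l
      _ < 1 := by linarith [hrow m i]

namespace IsTransient

variable {Q : Matrix ι ι ℝ} (hQ : IsTransient Q)
include hQ

theorem tendsto_pow_apply (i j : ι) : Tendsto (fun k => (Q ^ k) i j) atTop (𝓝 0) :=
  tendsto_pi_nhds.1 (tendsto_pi_nhds.1 hQ.tendsto_pow i) j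

theorem submatrix {f : κ → ι} (hf : f.Injective) : IsTransient (Q.submatrix f f) where
  nonneg _ _ := hQ.nonneg _ _
  tendsto_pow := tendsto_pi_nhds.2 fun i => tendsto_pi_nhds.2 fun j =>
    squeeze_zero (fun k => pow_apply_nonneg (fun _ _ => hQ.nonneg _ _) k i j)
      (fun k => pow_submatrix_apply_le hQ.nonneg hf k i j) (hQ.tendsto_pow_apply (f i) (f j))

theorem isUnit_det_one_sub : IsUnit (1 - Q).det := by
  refine isUnit_iff_ne_zero.2 fun h => ?_
  obtain ⟨z, hz0, hz⟩ := exists_mulVec_eq_zero_iff.2 h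
  have hQz : Q *ᵥ z = z := by rwa [sub_mulVec, one_mulVec, sub_eq_zero, eq_comm] at hz
  have hfix (k : ℕ) : Q ^ k *ᵥ z = z := by
    induction k with
    | zero => simp
    | succ k ih => rw [pow_succ, ← mulVec_mulVec, hQz, ih]
  have hlim := ((continuous_id.matrix_mulVec (continuous_const (y := z))).tendsto 0).comp
    hQ.tendsto_pow
  simp only [Function.comp_def, id, hfix, zero_mulVec] at hlim
  exact hz0 (tendsto_nhds_unique tendsto_const_nhds hlim)

theorem hasSum_pow_apply (i j : ι) : HasSum (fun k => (Q ^ k) i j) ((1 - Q)⁻¹ i j) := by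
  have hpartial (K : ℕ) : ∑ k ∈ range K, Q ^ k = (1 - Q ^ K) * (1 - Q)⁻¹ := by
    rw [← geom_sum_mul_neg, mul_assoc, mul_nonsing_inv _ hQ.isUnit_det_one_sub, mul_one]
  have hlim : Tendsto (fun K => ∑ k ∈ range K, Q ^ k) atTop (𝓝 (1 - Q)⁻¹) := by
    simp_rw [hpartial]
    simpa using ((tendsto_const_nhds (x := 1)).sub hQ.tendsto_pow).mul_const (1 - Q)⁻¹
  refine (hasSum_iff_tendsto_nat_of_nonneg (fun k => pow_apply_nonneg hQ.nonneg k i j) _).2 ?_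
  simpa [sum_apply] using tendsto_pi_nhds.1 (tendsto_pi_nhds.1 hlim i) j

theorem inv_one_sub_apply_nonneg (i j : ι) : 0 ≤ (1 - Q)⁻¹ i j :=
  (hQ.hasSum_pow_apply i j).nonneg fun k => pow_apply_nonneg hQ.nonneg k i j

theorem one_le_inv_one_sub_apply_self (i : ι) : 1 ≤ (1 - Q)⁻¹ i i := by
  simpa using le_hasSum (hQ.hasSum_pow_apply i i) 0 fun k _ => pow_apply_nonneg hQ.nonneg k i i

theorem inv_one_sub_submatrix_apply_le {f : κ → ι} (hf : f.Injective) (i j : κ) :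
    (1 - Q.submatrix f f)⁻¹ i j ≤ (1 - Q)⁻¹ (f i) (f j) :=
  hasSum_le (fun k => pow_submatrix_apply_le hQ.nonneg hf k i j)
    ((hQ.submatrix hf).hasSum_pow_apply i j) (hQ.hasSum_pow_apply (f i) (f j))

theorem inv_one_sub_submatrix_mulVec_le {f : κ → ι}
    (hf : f.Injective) {c : ι → ℝ} (hc : 0 ≤ c) (k : κ) :
    ((1 - Q.submatrix f f)⁻¹ *ᵥ (c ∘ f)) k ≤ ((1 - Q)⁻¹ *ᵥ c) (f k) := by
  simp only [mulVec, dotProduct, Function.comp_apply]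
  calc ∑ l, (1 - Q.submatrix f f)⁻¹ k l * c (f l)
      ≤ ∑ l, (1 - Q)⁻¹ (f k) (f l) * c (f l) :=
        sum_le_sum fun l _ =>
          mul_le_mul_of_nonneg_right (hQ.inv_one_sub_submatrix_apply_le hf k l) (hc _)
    _ ≤ ∑ i, (1 - Q)⁻¹ (f k) i * c i :=
        sum_comp_le_sum_of_injective hf (fun i => (1 - Q)⁻¹ (f k) i * c i) fun i =>
          mul_nonneg (hQ.inv_one_sub_apply_nonneg _ _) (hc i)

end IsTransient

noncomputable def fundamentalMatrix (P : Matrix ι ι ℝ) (S : Finset ι) :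
    Matrix {i // i ∉ S} {i // i ∉ S} ℝ :=
  (1 - P.submatrix Subtype.val Subtype.val)⁻¹

/-- The probability that the chain started at `i` visits `v` before entering `S`. -/
noncomputable def hitProb (P : Matrix ι ι ℝ) (S : Finset ι) (v i : {i // i ∉ S}) : ℝ :=
  fundamentalMatrix P S i v / fundamentalMatrix P S v v

variable {P : Matrix ι ι ℝ} {S T : Finset ι} {v : ι}

theorem submatrix_laplacian_mul {π : ι → ℝ} (hπ : ∀ i, π i ≠ 0) {d : ℝ} (hd : d ≠ 0)
    {e : κ → ι} (he : e.Injective) (hdet : IsUnit (1 - P.submatrix e e).det) :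
    (d • (diagonal π * (1 - P))).submatrix e e *
      (d⁻¹ • ((1 - P.submatrix e e)⁻¹ * diagonal fun i => (π (e i))⁻¹)) = 1 := by
  have hsub : (d • (diagonal π * (1 - P))).submatrix e e =
      d • (diagonal (π ∘ e) * (1 - P.submatrix e e)) := by
    ext i j
    simp [diagonal_mul, one_apply, he.eq_iff]
  rw [hsub, smul_mul_smul, mul_inv_cancel₀ hd, one_smul, mul_assoc,
    ← mul_assoc (1 - P.submatrix e e), mul_nonsing_inv _ hdet, one_mul, diagonal_mul_diagonal]
  simp [hπ]

section Transient

variable (hS : IsTransient (P.submatrix (Subtype.val : {i // i ∉ S} → ι) Subtype.val))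
include hS

theorem fundamentalMatrix_apply_self_pos (v : {i // i ∉ S}) : 0 < fundamentalMatrix P S v v :=
  zero_lt_one.trans_le (hS.one_le_inv_one_sub_apply_self v)

theorem hitProb_self (v : {i // i ∉ S}) : hitProb P S v v = 1 :=
  div_self (fundamentalMatrix_apply_self_pos hS v).ne'

theorem hitProb_nonneg (v i : {i // i ∉ S}) : 0 ≤ hitProb P S v i :=
  div_nonneg (hS.inv_one_sub_apply_nonneg i v) (hS.inv_one_sub_apply_nonneg v v)

theorem hitProb_insert (hv : v ∉ S) (i : {i // i ∉ insert v S}) :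
    hitProb P S ⟨v, hv⟩ (complEmbedding (subset_insert v S) i) =
      (fundamentalMatrix P (insert v S) *ᵥ fun l => P l v) i := by
  have hsub : (1 - P.submatrix (Subtype.val : {i // i ∉ S} → ι) Subtype.val).submatrix
      (complEmbedding (subset_insert v S)) (complEmbedding (subset_insert v S)) =
      1 - P.submatrix Subtype.val Subtype.val := by
    ext i j
    simp [one_apply, Subtype.ext_iff]
  have hcol : (fun l : {i // i ∉ insert v S} =>
      (1 - P.submatrix (Subtype.val : {i // i ∉ S} → ι) Subtype.val)
        (complEmbedding (subset_insert v S) l) (⟨v, hv⟩ : {i // i ∉ S})) =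
      -fun l : {i // i ∉ insert v S} => P l v := by
    ext ⟨l, hl⟩
    have hlv : l ≠ v := fun h => hl (h ▸ mem_insert_self v S)
    simp [Subtype.ext_iff, hlv]
  rw [hitProb, fundamentalMatrix, fundamentalMatrix,
    inv_apply_div_inv_apply_self_of_range_eq_compl (complEmbedding _).injective
      (range_complEmbedding_insert hv) hS.isUnit_det_one_sub
      (fundamentalMatrix_apply_self_pos hS _).ne',
    hsub, hcol, mulVec_neg, Pi.neg_apply, neg_neg]

theorem hitProb_anti (hST : S ⊆ T) (hv : v ∉ T) (i : {i // i ∉ T}) :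
    hitProb P T ⟨v, hv⟩ i ≤ hitProb P S ⟨v, fun h => hv (hST h)⟩ (complEmbedding hST i) := by
  have hvS : v ∉ S := fun h => hv (hST h)
  have hT := hS.submatrix (complEmbedding hST).injective
  obtain ⟨i, hi⟩ := i
  by_cases hiv : i = v
  · subst hiv
    exact (hitProb_self hT _).trans_le (hitProb_self hS _).ge
  have hi' : i ∉ insert v T := by simp [hi, hiv]
  have hSv := hS.submatrix (complEmbedding (subset_insert v S)).injective
  have hPv : 0 ≤ fun l : {i // i ∉ insert v S} => P l v :=
    fun l => hS.nonneg (complEmbedding (subset_insert v S) l) ⟨v, hvS⟩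
  calc hitProb P T ⟨v, hv⟩ ⟨i, hi⟩
      = (fundamentalMatrix P (insert v T) *ᵥ fun l => P l v) ⟨i, hi'⟩ :=
        hitProb_insert hT hv ⟨i, hi'⟩
    _ ≤ (fundamentalMatrix P (insert v S) *ᵥ fun l => P l v)
          (complEmbedding (insert_subset_insert v hST) ⟨i, hi'⟩) :=
        hSv.inv_one_sub_submatrix_mulVec_le (complEmbedding _).injective hPv _
    _ = hitProb P S ⟨v, hvS⟩ (complEmbedding hST ⟨i, hi⟩) :=
        (hitProb_insert hS hvS _).symm

theorem sum_hitProb_mul_fundamentalMatrix_div_anti {π : ι → ℝ} (hπ : ∀ i, 0 < π i)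
    (hST : S ⊆ T) (hv : v ∉ T) :
    ∑ i, hitProb P T ⟨v, hv⟩ i * fundamentalMatrix P T ⟨v, hv⟩ i / π i ≤
      ∑ i, hitProb P S ⟨v, fun h => hv (hST h)⟩ i *
        fundamentalMatrix P S ⟨v, fun h => hv (hST h)⟩ i / π i := by
  set g : {i // i ∉ S} → ℝ := fun i => hitProb P S ⟨v, fun h => hv (hST h)⟩ i *
    fundamentalMatrix P S ⟨v, fun h => hv (hST h)⟩ i / π i
  have hT := hS.submatrix (complEmbedding hST).injective
  calc _ ≤ ∑ i, g (complEmbedding hST i) :=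
        sum_le_sum fun i _ => div_le_div_of_nonneg_right
          (mul_le_mul (hitProb_anti hS hST hv i)
            (hS.inv_one_sub_submatrix_apply_le (complEmbedding hST).injective _ i)
            (hT.inv_one_sub_apply_nonneg _ _) (hitProb_nonneg hS _ _)) (hπ i).le
    _ ≤ ∑ i, g i := sum_comp_le_sum_of_injective (complEmbedding hST).injective g fun i =>
        div_nonneg (mul_nonneg (hitProb_nonneg hS _ _) (hS.inv_one_sub_apply_nonneg _ _)) (hπ i).le

theorem trace_inv_laplacian_sub_trace_inv_laplacian_insert {π : ι → ℝ} (hπ : ∀ i, π i ≠ 0)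
    {d : ℝ} (hd : d ≠ 0) (hv : v ∉ S) :
    ((d • (diagonal π * (1 - P))).submatrix (Subtype.val : {i // i ∉ S} → ι) Subtype.val)⁻¹.trace -
      ((d • (diagonal π * (1 - P))).submatrix
        (Subtype.val : {i // i ∉ insert v S} → ι) Subtype.val)⁻¹.trace =
      d⁻¹ * ∑ i, hitProb P S ⟨v, hv⟩ i * fundamentalMatrix P S ⟨v, hv⟩ i / π i := by
  have hmul := submatrix_laplacian_mul hπ hd Subtype.val_injective hS.isUnit_det_one_sub
  have happly (i j : {i // i ∉ S}) :
      ((d • (diagonal π * (1 - P))).submatrix Subtype.val Subtype.val)⁻¹ i j =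
        fundamentalMatrix P S i j / (d * π j) := by
    rw [inv_eq_right_inv hmul]
    simp [fundamentalMatrix, mul_diagonal]
    field_simp
  have hvv := (fundamentalMatrix_apply_self_pos hS ⟨v, hv⟩).ne'
  refine (trace_inv_sub_trace_inv_submatrix_of_range_eq_compl (complEmbedding _).injective
    (range_complEmbedding_insert hv) (isUnit_det_of_right_inverse hmul)
    (by rw [happly]; exact div_ne_zero hvv (mul_ne_zero hd (hπ v)))).trans ?_
  rw [mul_sum]
  refine sum_congr rfl fun i _ => ?_
  rw [happly, happly, happly, hitProb]
  have := hπ v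
  have := hπ i
  field_simp

end Transient

end Matrix

theorem directed_group_resistance_supermodular_general
    {n : ℕ}
    (P : Matrix (Fin n) (Fin n) ℝ)
    (hP0 : ∀ i j, 0 ≤ P i j)
    (hProw : ∀ i, ∑ j, P i j = 1)
    (hPirr : ∀ i j, ∃ m : ℕ, 1 ≤ m ∧ 0 < (P ^ m) i j)
    (pv : Fin n → ℝ) (hpv0 : ∀ i, 0 < pv i)
    (d : ℝ) (hd : 0 < d)
    (L : Matrix (Fin n) (Fin n) ℝ)
    (hL : L = d • (Matrix.diagonal pv * (1 - P)))
    (X Y : Finset (Fin n)) (hXnonempty : X.Nonempty) (hXY : X ⊆ Y)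
    (v : Fin n) (hv : v ∉ Y)
    (LX : Matrix {i : Fin n // i ∉ X} {i : Fin n // i ∉ X} ℝ)
    (hLX : LX = L.submatrix Subtype.val Subtype.val)
    (LXv : Matrix {i : Fin n // i ∉ insert v X} {i : Fin n // i ∉ insert v X} ℝ)
    (hLXv : LXv = L.submatrix Subtype.val Subtype.val)
    (LY : Matrix {i : Fin n // i ∉ Y} {i : Fin n // i ∉ Y} ℝ)
    (hLY : LY = L.submatrix Subtype.val Subtype.val)
    (LYv : Matrix {i : Fin n // i ∉ insert v Y} {i : Fin n // i ∉ insert v Y} ℝ)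
    (hLYv : LYv = L.submatrix Subtype.val Subtype.val) :
    (LY⁻¹).trace - (LYv⁻¹).trace ≤ (LX⁻¹).trace - (LXv⁻¹).trace := by
  subst hL hLX hLXv hLY hLYv
  obtain ⟨z, hz⟩ := hXnonempty
  have hP : P ∈ rowStochastic ℝ (Fin n) := mem_rowStochastic_iff_sum.2 ⟨hP0, hProw⟩
  have htrans {S : Finset (Fin n)} (hzS : z ∈ S) :
      IsTransient (P.submatrix (Subtype.val : {i // i ∉ S} → Fin n) Subtype.val) :=
    isTransient_submatrix_of_mem_rowStochastic hP Subtype.val_injective (by simpa using hzS)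
      fun i => (hPirr i z).imp fun _ h => h.2
  have hpv (i : Fin n) : pv i ≠ 0 := (hpv0 i).ne'
  rw [trace_inv_laplacian_sub_trace_inv_laplacian_insert (htrans hz) hpv hd.ne' fun h => hv (hXY h),
    trace_inv_laplacian_sub_trace_inv_laplacian_insert (htrans (hXY hz)) hpv hd.ne' hv]
  exact mul_le_mul_of_nonneg_left
    (sum_hitProb_mul_fundamentalMatrix_div_anti (htrans hz) hpv0 hXY hv) (inv_nonneg.2 hd.le)

/-- Supermodularity of the group resistance distance: for nonempty
`X ⊆ Y`, `v ∉ Y` and `Y ∪ {v}` proper,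
`tr((L_{\X})⁻¹) − tr((L_{\(X∪{v})})⁻¹) ≥ tr((L_{\Y})⁻¹) − tr((L_{\(Y∪{v})})⁻¹)`. -/
theorem directed_group_resistance_supermodular
    {n : ℕ} (hn : 2 ≤ n)
    (P : Matrix (Fin n) (Fin n) ℝ)
    (hP0 : ∀ i j, 0 ≤ P i j)
    (hProw : ∀ i, ∑ j, P i j = 1)
    (hPirr : ∀ i j, ∃ m : ℕ, 1 ≤ m ∧ 0 < (P ^ m) i j)
    (pv : Fin n → ℝ) (hpv0 : ∀ i, 0 < pv i) (hpvsum : ∑ i, pv i = 1)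
    (hstat : pv ᵥ* P = pv)
    (d : ℝ) (hd : 0 < d)
    (L : Matrix (Fin n) (Fin n) ℝ)
    (hL : L = d • (Matrix.diagonal pv * (1 - P)))
    (X Y : Finset (Fin n)) (hXnonempty : X.Nonempty) (hXY : X ⊆ Y)
    (v : Fin n) (hv : v ∉ Y) (hYv : insert v Y ≠ Finset.univ)
    (LX : Matrix {i : Fin n // i ∉ X} {i : Fin n // i ∉ X} ℝ)
    (hLX : LX = L.submatrix Subtype.val Subtype.val)
    (LXv : Matrix {i : Fin n // i ∉ insert v X} {i : Fin n // i ∉ insert v X} ℝ)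
    (hLXv : LXv = L.submatrix Subtype.val Subtype.val)
    (LY : Matrix {i : Fin n // i ∉ Y} {i : Fin n // i ∉ Y} ℝ)
    (hLY : LY = L.submatrix Subtype.val Subtype.val)
    (LYv : Matrix {i : Fin n // i ∉ insert v Y} {i : Fin n // i ∉ insert v Y} ℝ)
    (hLYv : LYv = L.submatrix Subtype.val Subtype.val) :
    (LY⁻¹).trace - (LYv⁻¹).trace ≤ (LX⁻¹).trace - (LXv⁻¹).trace :=
  directed_group_resistance_supermodular_general P hP0 hProw hPirr pv hpv0 d hd L hL X Y hXnonempty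
    hXY v hv LX hLX LXv hLXv LY hLY LYv hLYv
end
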